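/- arXiv:1201.4754 — 11 statements merged into one kernel-verified Lean document; each statement's English description precedes it below -/
import Mathlib

section
/- In any hedonic game, every strongly individually stable partition is core stable. -/
open Finset

abbrev Pref (N : Type*) := N → Finset N → Finset N → Prop

def SPref {N : Type*} (pref : Pref N) (i : N) (S T : Finset N) : Prop :=
  pref i S T ∧ ¬ pref i T S

def IsHedonic {N : Type*} (pref : Pref N) : Prop :=
  (∀ (i : N) (S T : Finset N), i ∈ S → i ∈ T → pref i S T ∨ pref i T S) ∧
  (∀ (i : N) (S T U : Finset N), pref i S T → pref i T U → pref i S U)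

section Defs

variable {N : Type*} [DecidableEq N] [Fintype N]

def IsPartition (π : N → Finset N) : Prop :=
  (∀ i, i ∈ π i) ∧ ∀ i j, j ∈ π i → π j = π i

def Reachable (π π' : N → Finset N) (H : Finset N) : Prop :=
  π' ≠ π ∧ ∀ i j, i ∉ H → j ∉ H → i ≠ j → (π i = π j ↔ π' i = π' j)

def WeaklyBlocks (pref : Pref N) (π : N → Finset N) (S : Finset N) : Prop :=
  (∀ i ∈ S, pref i S (π i)) ∧ ∃ j ∈ S, SPref pref j S (π j)

def StrictCoreStable (pref : Pref N) (π : N → Finset N) : Prop :=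
  ∀ S : Finset N, ¬ WeaklyBlocks pref π S

def Blocks (pref : Pref N) (π : N → Finset N) (S : Finset N) : Prop :=
  S.Nonempty ∧ ∀ i ∈ S, SPref pref i S (π i)

def CoreStable (pref : Pref N) (π : N → Finset N) : Prop :=
  ∀ S : Finset N, ¬ Blocks pref π S

def StrongNashBlocks (pref : Pref N) (π : N → Finset N) (H : Finset N) : Prop :=
  H.Nonempty ∧ ∃ π' : N → Finset N, IsPartition π' ∧ Reachable π π' H ∧
    ∀ i ∈ H, SPref pref i (π' i) (π i)

def StrongNashStable (pref : Pref N) (π : N → Finset N) : Prop :=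
  ∀ H : Finset N, ¬ StrongNashBlocks pref π H

def StronglyIndividuallyBlocks (pref : Pref N) (π : N → Finset N) (H : Finset N) : Prop :=
  H.Nonempty ∧ ∃ π' : N → Finset N, IsPartition π' ∧ Reachable π π' H ∧
    (∀ i ∈ H, SPref pref i (π' i) (π i)) ∧
    ∀ j : N, (∃ i ∈ H, j ∈ π' i) → pref j (π' j) (π j)

def StronglyIndividuallyStable (pref : Pref N) (π : N → Finset N) : Prop :=
  ∀ H : Finset N, ¬ StronglyIndividuallyBlocks pref π H

def WeaklyNashBlocks (pref : Pref N) (π : N → Finset N) (H : Finset N) : Prop :=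
  H.Nonempty ∧ ∃ π' : N → Finset N, IsPartition π' ∧ Reachable π π' H ∧
    (∀ i ∈ H, pref i (π' i) (π i)) ∧ ∃ i ∈ H, SPref pref i (π' i) (π i)

def StrictlyStrongNashStable (pref : Pref N) (π : N → Finset N) : Prop :=
  ∀ H : Finset N, ¬ WeaklyNashBlocks pref π H

def NashStable (pref : Pref N) (π : N → Finset N) : Prop :=
  ∀ (i : N) (T : Finset N), (T = ∅ ∨ ∃ j, π j = T) → i ∉ T →
    ¬ SPref pref i (insert i T) (π i)

def IndividuallyStable (pref : Pref N) (π : N → Finset N) : Prop :=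
  ∀ (i : N) (T : Finset N), (T = ∅ ∨ ∃ j, π j = T) → i ∉ T →
    ¬ (SPref pref i (insert i T) (π i) ∧ ∀ j ∈ T, pref j (insert i T) T)

def ParetoOptimal (pref : Pref N) (π : N → Finset N) : Prop :=
  ∀ π' : N → Finset N, IsPartition π' → (∀ j, pref j (π' j) (π j)) →
    ¬ ∃ i, SPref pref i (π' i) (π i)

def PerfectPartition (pref : Pref N) (π : N → Finset N) : Prop :=
  ∀ (i : N) (S : Finset N), i ∈ S → pref i (π i) S

def ChoiceSets (pref : Pref N) (i : N) (X : Finset N) : Set (Finset N) :=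
  {S' | S' ⊆ X ∧ i ∈ S' ∧ ∀ S'' ⊆ X, i ∈ S'' → pref i S' S''}

def TopResponsiveWith (pref : Pref N) (ch : N → Finset N → Finset N) : Prop :=
  (∀ (i : N) (X : Finset N), i ∈ X → ChoiceSets pref i X = {ch i X}) ∧
  (∀ (i : N) (X Y : Finset N), i ∈ X → i ∈ Y →
      SPref pref i (ch i X) (ch i Y) → SPref pref i X Y) ∧
  (∀ (i : N) (X Y : Finset N), i ∈ X → i ∈ Y →
      ch i X = ch i Y → X ⊂ Y → SPref pref i X Y)

def MutualTop (ch : N → Finset N → Finset N) : Prop :=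
  ∀ (i j : N) (X : Finset N), i ∈ X → j ∈ X → (i ∈ ch j X ↔ j ∈ ch i X)

def AvoidSets (pref : Pref N) (i : N) (X : Finset N) : Set (Finset N) :=
  {S' | S' ⊆ X ∧ i ∈ S' ∧ ∀ S'' ⊆ X, i ∈ S'' → pref i S'' S'}

def BottomResponsive (pref : Pref N) : Prop :=
  (∀ (i : N) (X Y : Finset N), i ∈ X → i ∈ Y →
      (∀ X' ∈ AvoidSets pref i X, ∀ Y' ∈ AvoidSets pref i Y, SPref pref i X' Y') →
      SPref pref i X Y) ∧
  (∀ (i : N) (X Y : Finset N), i ∈ X → i ∈ Y →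
      (AvoidSets pref i X ∩ AvoidSets pref i Y).Nonempty → Y.card ≤ X.card → pref i X Y)

def StrongBottomResponsiveWith (pref : Pref N) (av : N → Finset N → Finset N) : Prop :=
  BottomResponsive pref ∧
    ∀ (i : N) (X : Finset N), i ∈ X → AvoidSets pref i X = {av i X}

def MutualBottom (av : N → Finset N → Finset N) : Prop :=
  ∀ (i j : N) (X : Finset N), i ∈ X → j ∈ X → (i ∈ av j X ↔ j ∈ av i X)

end Defs

/-- In any hedonic game, every strongly individually stable partition is core stable. -/
theorem SIS_implies_core {N : Type*} [DecidableEq N] [Fintype N]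
    (pref : Pref N) (hG : IsHedonic pref) (π : N → Finset N) (hπ : IsPartition π)
    (hSIS : StronglyIndividuallyStable pref π) :
    CoreStable pref π := by
  intro S hB
  obtain ⟨hne, hpr⟩ := hB
  obtain ⟨i0, hi0⟩ := hne
  classical
  set π' : N → Finset N := fun i => if i ∈ S then S else π i \ S with hπ'
  have hmem : ∀ i, i ∈ π' i := by
    intro i
    by_cases h : i ∈ S <;> simp [π', h, (hπ.1 i)]
  have hSne : ∀ i ∈ S, S ≠ π i := by
    intro i hi heq
    have := (hpr i hi).2
    have : pref i (π i) S := heq ▸ ((hG.1 i S S hi hi).elim id id)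
    exact (hpr i hi).2 this
  apply hSIS S
  refine ⟨⟨i0, hi0⟩, π', ?_, ?_, ?_, ?_⟩
  · constructor
    · exact hmem
    · intro i j hj
      by_cases hi : i ∈ S
      · simp only [π', if_pos hi] at hj
        simp [π', hj, hi]
      · simp only [π', if_neg hi, Finset.mem_sdiff] at hj
        have := hπ.2 i j hj.1
        simp [π', hj.2, hi, this]
  · constructor
    · intro h
      have : π' i0 = π i0 := congrFun h i0
      simp only [π', if_pos hi0] at this
      exact hSne i0 hi0 this
    · intro i j hi hj hij
      simp only [π', if_neg hi, if_neg hj]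
      constructor
      · intro h; rw [h]
      · intro h
        have hi' : i ∈ π j \ S := h ▸ (by simp [hπ.1 i, hi])
        have : i ∈ π j := (Finset.mem_sdiff.mp hi').1
        exact hπ.2 j i this
  · intro i hi
    simpa [π', if_pos hi] using hpr i hi
  · intro j hj
    obtain ⟨i, hi, hji⟩ := hj
    simp only [π', if_pos hi] at hji
    have := (hpr j hji).1
    simpa [π', if_pos hji] using this
end

section
/- There exists a 4-player hedonic game admitting a partition that is both strict core stable and Nash stable, but in which no partition is strong Nash stable. -/
open Finset

/-! Numbering the players 0, …, 3 mod 4, the game is cyclic: player `i` ranks `{i, i + 1}` first,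
`{i - 1, i}` second, `{i}` third and everything else last. In the pairing `{0,1}, {2,3}` the even players have their first choice and
the odd ones their second; in `{1,2}, {3,0}` it is the other way round, so each pairing is
strong-Nash-blocked by the players who get their second choice in it. Any other partition is
blocked by all players whose coalition differs from one of the two pairings: that fails for both
pairings only if an even and an odd player, hence two neighbours, both hold their first choice,
which is impossible since those two coalitions overlap without being equal. -/

section UtilityPref

variable {N α : Type*} [LinearOrder α]

def prefOfUtility (u : N → Finset N → α) : Pref N := fun i S T => u i T ≤ u i S

theorem isHedonic_prefOfUtility (u : N → Finset N → α) : IsHedonic (prefOfUtility u) :=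
  ⟨fun i S T _ _ => le_total (u i T) (u i S), fun _ _ _ _ hST hTU => hTU.trans hST⟩

theorem sPref_prefOfUtility_iff (u : N → Finset N → α) (i : N) (S T : Finset N) :
    SPref (prefOfUtility u) i S T ↔ u i T < u i S :=
  ⟨fun h => lt_of_not_ge h.2, fun h => ⟨h.le, not_le.mpr h⟩⟩

end UtilityPref

theorem not_strongNashStable_of_forall_sPref {N : Type*} [DecidableEq N] [Fintype N]
    {pref : Pref N} {π τ : N → Finset N} (hτ : IsPartition τ) (hne : π ≠ τ)
    (himp : ∀ i, π i ≠ τ i → SPref pref i (τ i) (π i)) : ¬ StrongNashStable pref π := by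
  obtain ⟨k, hk⟩ := Function.ne_iff.mp hne
  refine fun hπ => hπ {i | π i ≠ τ i} ⟨⟨k, by simpa using hk⟩, τ, hτ, ⟨hne.symm, ?_⟩, ?_⟩
  · intro i j hi hj _
    simp only [Finset.mem_filter, Finset.mem_univ, true_and, not_not] at hi hj
    rw [hi, hj]
  · intro i hi
    exact himp i (by simpa using hi)

namespace CyclicGame

def firstChoice (i : Fin 4) : Finset (Fin 4) := {i, i + 1}

def secondChoice (i : Fin 4) : Finset (Fin 4) := {i - 1, i}

def utility (i : Fin 4) (S : Finset (Fin 4)) : ℕ :=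
  if S = firstChoice i then 3 else if S = secondChoice i then 2 else if S = {i} then 1 else 0

def cyclicPref : Pref (Fin 4) := prefOfUtility utility

theorem sPref_firstChoice {i : Fin 4} {S : Finset (Fin 4)} (hS : S ≠ firstChoice i) :
    SPref cyclicPref i (firstChoice i) S := by
  rw [cyclicPref, sPref_prefOfUtility_iff]
  revert i S
  decide

theorem sPref_secondChoice {i : Fin 4} {S : Finset (Fin 4)} (h₁ : S ≠ firstChoice i)
    (h₂ : S ≠ secondChoice i) : SPref cyclicPref i (secondChoice i) S := by
  rw [cyclicPref, sPref_prefOfUtility_iff]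
  revert i S
  decide

theorem eq_firstChoice_of_not_sPref {π τ : Fin 4 → Finset (Fin 4)} {i : Fin 4}
    (hτ : τ i = firstChoice i ∨ τ i = secondChoice i) (hne : π i ≠ τ i)
    (h : ¬ SPref cyclicPref i (τ i) (π i)) : π i = firstChoice i ∧ τ i = secondChoice i := by
  rcases hτ with hτ | hτ
  · exact absurd (sPref_firstChoice (hτ ▸ hne)) (hτ ▸ h)
  · refine ⟨by_contra fun hfirst => h ?_, hτ⟩
    exact hτ ▸ sPref_secondChoice hfirst (hτ ▸ hne)

theorem firstChoice_ne_firstChoice_succ (i : Fin 4) : firstChoice i ≠ firstChoice (i + 1) := by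
  revert i
  decide

theorem not_firstChoice_and_firstChoice_succ {π : Fin 4 → Finset (Fin 4)} (hπ : IsPartition π)
    (i : Fin 4) : ¬ (π i = firstChoice i ∧ π (i + 1) = firstChoice (i + 1)) := by
  rintro ⟨hi, hsucc⟩
  have hmem : i + 1 ∈ π i := by simp [hi, firstChoice]
  have hsame : firstChoice (i + 1) = firstChoice i := by
    rw [← hi, ← hsucc]
    exact hπ.2 i (i + 1) hmem
  exact firstChoice_ne_firstChoice_succ i hsame.symm

def evenPairing : Fin 4 → Finset (Fin 4) := ![{0, 1}, {0, 1}, {2, 3}, {2, 3}]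

def oddPairing : Fin 4 → Finset (Fin 4) := ![{0, 3}, {1, 2}, {1, 2}, {0, 3}]

theorem isPartition_evenPairing : IsPartition evenPairing := by
  unfold IsPartition
  decide

theorem isPartition_oddPairing : IsPartition oddPairing := by
  unfold IsPartition
  decide

theorem evenPairing_eq_firstChoice_or_secondChoice (i : Fin 4) :
    evenPairing i = firstChoice i ∨ evenPairing i = secondChoice i := by
  revert i
  decide

theorem oddPairing_eq_firstChoice_or_secondChoice (i : Fin 4) :
    oddPairing i = firstChoice i ∨ oddPairing i = secondChoice i := by
  revert i
  decide

theorem adjacent_of_evenPairing_secondChoice_of_oddPairing_secondChoice {i j : Fin 4}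
    (hi : evenPairing i = secondChoice i) (hj : oddPairing j = secondChoice j) :
    j = i + 1 ∨ i = j + 1 := by
  revert i j
  decide

theorem forall_sPref_evenPairing_or_oddPairing {π : Fin 4 → Finset (Fin 4)}
    (hπ : IsPartition π) :
    (∀ i, π i ≠ evenPairing i → SPref cyclicPref i (evenPairing i) (π i)) ∨
      ∀ i, π i ≠ oddPairing i → SPref cyclicPref i (oddPairing i) (π i) := by
  by_contra! ⟨⟨i, hi, hi'⟩, ⟨j, hj, hj'⟩⟩
  obtain ⟨hπi, hevi⟩ :=
    eq_firstChoice_of_not_sPref (evenPairing_eq_firstChoice_or_secondChoice i) hi hi'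
  obtain ⟨hπj, hoddj⟩ :=
    eq_firstChoice_of_not_sPref (oddPairing_eq_firstChoice_or_secondChoice j) hj hj'
  rcases adjacent_of_evenPairing_secondChoice_of_oddPairing_secondChoice hevi hoddj with rfl | rfl
  · exact not_firstChoice_and_firstChoice_succ hπ i ⟨hπi, hπj⟩
  · exact not_firstChoice_and_firstChoice_succ hπ j ⟨hπj, hπi⟩

theorem strongNashBlocks_evenPairing : StrongNashBlocks cyclicPref evenPairing {1, 3} := by
  refine ⟨by decide, oddPairing, isPartition_oddPairing, ?_, ?_⟩
  · unfold Reachable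
    decide
  · simp only [cyclicPref, sPref_prefOfUtility_iff]
    decide

theorem strongNashBlocks_oddPairing : StrongNashBlocks cyclicPref oddPairing {0, 2} := by
  refine ⟨by decide, evenPairing, isPartition_evenPairing, ?_, ?_⟩
  · unfold Reachable
    decide
  · simp only [cyclicPref, sPref_prefOfUtility_iff]
    decide

theorem not_strongNashStable {π : Fin 4 → Finset (Fin 4)} (hπ : IsPartition π) :
    ¬ StrongNashStable cyclicPref π := by
  by_cases hA : π = evenPairing
  · exact hA ▸ fun h => h _ strongNashBlocks_evenPairing
  by_cases hB : π = oddPairing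
  · exact hB ▸ fun h => h _ strongNashBlocks_oddPairing
  rcases forall_sPref_evenPairing_or_oddPairing hπ with h | h
  · exact not_strongNashStable_of_forall_sPref isPartition_evenPairing hA h
  · exact not_strongNashStable_of_forall_sPref isPartition_oddPairing hB h

/- Only the odd players can strictly improve on `evenPairing`, and the first choice of each of them
contains an even player who already holds hers. -/
theorem strictCoreStable_evenPairing : StrictCoreStable cyclicPref evenPairing := by
  unfold StrictCoreStable WeaklyBlocks
  simp only [cyclicPref, sPref_prefOfUtility_iff, prefOfUtility]
  decide

theorem nashStable_evenPairing : NashStable cyclicPref evenPairing := by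
  unfold NashStable
  simp only [cyclicPref, sPref_prefOfUtility_iff]
  decide

end CyclicGame

open CyclicGame in
/-- There is a 4-player hedonic game admitting a partition that is both strict core
stable and Nash stable, but in which no partition is strong Nash stable. -/
theorem exists_game_SC_NS_but_no_SNS :
    ∃ pref : Pref (Fin 4), IsHedonic pref ∧
      (∃ π : Fin 4 → Finset (Fin 4), IsPartition π ∧
        StrictCoreStable pref π ∧ NashStable pref π) ∧
      ∀ π : Fin 4 → Finset (Fin 4), IsPartition π → ¬ StrongNashStable pref π :=
  ⟨cyclicPref, isHedonic_prefOfUtility utility,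
    ⟨evenPairing, isPartition_evenPairing, strictCoreStable_evenPairing, nashStable_evenPairing⟩,
    fun _ => not_strongNashStable⟩
end

section
/- There exists a 4-player hedonic game with a partition that is strong Nash stable but not Pareto optimal (hence strong Nash stability implies neither Pareto optimality nor strict core stability). -/
open Finset

def exU : Fin 4 → Finset (Fin 4) → ℕ
  | 0, S => if S = {0,1} ∨ S = {0,2} ∨ S = {0,3} then 1 else 0
  | 1, S => if S = {0,1} ∨ S = {1,2} ∨ S = {1,3} then 1 else 0
  | 2, S => if S = {1,2} ∨ S = {2,3} then 1 else 0
  | 3, S => if S = {0,3} ∨ S = {1,3} then 2 else if S = {2,3} then 1 else 0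

def exPref : Pref (Fin 4) := fun i S T => exU i T ≤ exU i S

def exPi : Fin 4 → Finset (Fin 4) := fun i => if i = 0 ∨ i = 1 then {0,1} else {2,3}

lemma exU0_le (S : Finset (Fin 4)) : exU 0 S ≤ 1 := by
  simp only [exU]; split <;> omega

lemma exU1_le (S : Finset (Fin 4)) : exU 1 S ≤ 1 := by
  simp only [exU]; split <;> omega

lemma exU2_le (S : Finset (Fin 4)) : exU 2 S ≤ 1 := by
  simp only [exU]; split <;> omega

lemma exU3_gt (S : Finset (Fin 4)) (h : 1 < exU 3 S) : S = {0,3} ∨ S = {1,3} := by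
  by_contra hc
  push_neg at hc
  simp only [exU] at h
  rw [if_neg (by tauto)] at h
  split at h <;> omega

/-- There is a 4-player hedonic game with a partition that is strong Nash stable but not
Pareto optimal. -/
theorem exists_SNS_not_PO :
    ∃ pref : Pref (Fin 4), IsHedonic pref ∧
      ∃ π : Fin 4 → Finset (Fin 4), IsPartition π ∧
        StrongNashStable pref π ∧ ¬ ParetoOptimal pref π := by
  refine ⟨exPref, ⟨?_, ?_⟩, exPi, ?_, ?_, ?_⟩
  · intro i S T _ _
    exact (le_total (exU i T) (exU i S)).imp id id
  · intro i S T U h1 h2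
    exact le_trans h2 h1
  · constructor
    · decide
    · decide
  · -- Strong Nash stable
    rintro H ⟨hne, π', hp, hr, himp⟩
    have key : ∀ i : Fin 4, i ∈ H → exU i (exPi i) < exU i (π' i) := by
      intro i hi
      have h := himp i hi
      have h2 := h.2
      simp only [exPref, SPref, not_le] at h ⊢
      exact h.2
    have h0 : (0 : Fin 4) ∉ H := by
      intro h
      have := key 0 h
      have hb := exU0_le (π' 0)
      have : exU 0 (exPi 0) = 1 := by decide
      omega
    have h1 : (1 : Fin 4) ∉ H := by
      intro h
      have := key 1 h
      have hb := exU1_le (π' 1)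
      have : exU 1 (exPi 1) = 1 := by decide
      omega
    have h2 : (2 : Fin 4) ∉ H := by
      intro h
      have := key 2 h
      have hb := exU2_le (π' 2)
      have : exU 2 (exPi 2) = 1 := by decide
      omega
    have h3 : (3 : Fin 4) ∈ H := by
      obtain ⟨x, hx⟩ := hne
      fin_cases x
      · exact absurd hx h0
      · exact absurd hx h1
      · exact absurd hx h2
      · exact hx
    have hk := key 3 h3
    have hval : exU 3 (exPi 3) = 1 := by decide
    have h3' : π' 3 = {0,3} ∨ π' 3 = {1,3} := exU3_gt _ (by omega)
    have h01 : π' 0 = π' 1 :=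
      (hr.2 0 1 h0 h1 (by decide)).mp (by decide)
    rcases h3' with h | h
    · have hm : (0 : Fin 4) ∈ π' 3 := by rw [h]; decide
      have e0 : π' 0 = π' 3 := hp.2 3 0 hm
      have : (1 : Fin 4) ∈ π' 1 := hp.1 1
      rw [← h01, e0, h] at this
      simp at this
    · have hm : (1 : Fin 4) ∈ π' 3 := by rw [h]; decide
      have e1 : π' 1 = π' 3 := hp.2 3 1 hm
      have : (0 : Fin 4) ∈ π' 0 := hp.1 0
      rw [h01, e1, h] at this
      simp at this
  · -- not Pareto optimal
    intro hpo
    have := hpo (fun i => if i = 1 ∨ i = 2 then {1,2} else {0,3})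
      (by constructor <;> decide) (by intro j; show exU j _ ≤ exU j _; fin_cases j <;> decide)
    refine this ⟨3, ?_, ?_⟩
    · show exU 3 _ ≤ exU 3 _; decide
    · show ¬ exU 3 _ ≤ exU 3 _; decide
end

section
/- If a hedonic game satisfies top responsiveness and mutuality, then the partition returned by the Top Covering Algorithm contains, for each player i, the choice set ch(i,N) within i's coalition: ch(i,N) ⊆ π(i). -/
open Finset

/-- The connected component of `i` in `X` under the neighbourhood relation
`a ∼ b ↔ b ∈ ch a X` (within `X`). -/
noncomputable def CC {N : Type*} [Fintype N] (ch : N → Finset N → Finset N)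
    (i : N) (X : Finset N) : Finset N :=
  (Set.toFinite {k : N | Relation.ReflTransGen (fun a b => b ∈ X ∧ b ∈ ch a X) i k}).toFinset

/-- `TCARun ch R P` : `P` is a possible output of the Top Covering Algorithm started on the
set of remaining players `R`: repeatedly pick `i ∈ R` minimizing `|CC(i,R)|`, put the
coalition `CC(i,R)` into the partition, and remove it from `R`. -/
inductive TCARun {N : Type*} [DecidableEq N] [Fintype N]
    (ch : N → Finset N → Finset N) : Finset N → Finset (Finset N) → Prop
  | nil : TCARun ch ∅ ∅
  | step {R : Finset N} {P : Finset (Finset N)} (i : N) (hi : i ∈ R)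
      (hmin : ∀ j ∈ R, (CC ch i R).card ≤ (CC ch j R).card)
      (htail : TCARun ch (R \ CC ch i R) P) :
      TCARun ch R (insert (CC ch i R) P)

section Aux

variable {N : Type*} [DecidableEq N] [Fintype N]

lemma mem_CC {ch : N → Finset N → Finset N} {i k : N} {X : Finset N} :
    k ∈ CC ch i X ↔ Relation.ReflTransGen (fun a b => b ∈ X ∧ b ∈ ch a X) i k := by
  simp [CC, Set.Finite.mem_toFinset]

lemma ch_mem_choiceSets {pref : Pref N} {ch : N → Finset N → Finset N}
    (hTR : TopResponsiveWith pref ch) {i : N} {X : Finset N} (hi : i ∈ X) :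
    ch i X ∈ ChoiceSets pref i X := by
  rw [hTR.1 i X hi]; rfl

lemma ch_subset {pref : Pref N} {ch : N → Finset N → Finset N}
    (hTR : TopResponsiveWith pref ch) {i : N} {X : Finset N} (hi : i ∈ X) :
    ch i X ⊆ X := (ch_mem_choiceSets hTR hi).1

lemma mem_ch_self {pref : Pref N} {ch : N → Finset N → Finset N}
    (hTR : TopResponsiveWith pref ch) {i : N} {X : Finset N} (hi : i ∈ X) :
    i ∈ ch i X := (ch_mem_choiceSets hTR hi).2.1

lemma ch_eq_of_subset {pref : Pref N} {ch : N → Finset N → Finset N}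
    (hTR : TopResponsiveWith pref ch) {i : N} {X Y : Finset N}
    (hiY : i ∈ Y) (hYX : Y ⊆ X) (hchY : ch i X ⊆ Y) : ch i Y = ch i X := by
  have hiX : i ∈ X := hYX hiY
  have hX := ch_mem_choiceSets hTR hiX
  have : ch i X ∈ ChoiceSets pref i Y :=
    ⟨hchY, hX.2.1, fun S'' hS'' hiS'' => hX.2.2 S'' (hS''.trans hYX) hiS''⟩
  rw [hTR.1 i Y hiY] at this
  exact this.symm

/-- Along the reachability relation starting in `R`, all points stay in `R`,
and the relation can be reversed using mutuality. -/
lemma reach_symm {pref : Pref N} {ch : N → Finset N → Finset N}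
    (hTR : TopResponsiveWith pref ch) (hMut : MutualTop ch) {R : Finset N} {a b : N}
    (h : Relation.ReflTransGen (fun a b => b ∈ R ∧ b ∈ ch a R) a b) (ha : a ∈ R) :
    b ∈ R ∧ Relation.ReflTransGen (fun a b => b ∈ R ∧ b ∈ ch a R) b a := by
  induction h with
  | refl => exact ⟨ha, Relation.ReflTransGen.refl⟩
  | @tail y z hxy hyz ih =>
    obtain ⟨hyR, hrev⟩ := ih
    have hzR : z ∈ R := hyz.1
    have : y ∈ ch z R := (hMut y z R hyR hzR).mpr hyz.2
    exact ⟨hzR, Relation.ReflTransGen.trans (Relation.ReflTransGen.single ⟨hyR, this⟩) hrev⟩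

lemma tca_main {pref : Pref N} {ch : N → Finset N → Finset N}
    (hTR : TopResponsiveWith pref ch) (hMut : MutualTop ch) :
    ∀ {R : Finset N} {P : Finset (Finset N)}, TCARun ch R P →
      (∀ j ∈ R, ch j Finset.univ ⊆ R) →
      ∀ i : N, ∀ S ∈ P, i ∈ S → ch i Finset.univ ⊆ S := by
  intro R P hrun
  induction hrun with
  | nil => intro _ i S hS; simp at hS
  | step i0 hi0 hmin htail ih =>
    rename_i R P
    intro hInv j S hS hjS
    set rel := fun a b => b ∈ R ∧ b ∈ ch a R with hrel
    have hchEq : ∀ a ∈ R, ch a Finset.univ = ch a R := fun a ha =>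
      (ch_eq_of_subset hTR ha (Finset.subset_univ R) (hInv a ha)).symm
    -- members of CC i0 R are in R and reach back to i0
    rcases Finset.mem_insert.mp hS with hS0 | hSP
    · -- S is the newly formed coalition
      subst hS0
      have hjreach : Relation.ReflTransGen rel i0 j := mem_CC.mp hjS
      obtain ⟨hjR, hback⟩ := reach_symm hTR hMut hjreach hi0
      intro k hk
      rw [hchEq j hjR] at hk
      have hkR : k ∈ R := ch_subset hTR hjR hk
      exact mem_CC.mpr (hjreach.tail ⟨hkR, hk⟩)
    · -- S comes from the tail run; establish the invariant for R \ CC i0 R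
      refine ih ?_ j S hSP hjS
      intro a ha k hk
      obtain ⟨haR, haNot⟩ := Finset.mem_sdiff.mp ha
      rw [hchEq a haR] at hk
      have hkR : k ∈ R := ch_subset hTR haR hk
      refine Finset.mem_sdiff.mpr ⟨hkR, fun hkCC => haNot ?_⟩
      -- k ∈ CC i0 R and a ∈ ch a R with k ∈ ch a R ⇒ a reachable from i0
      have hkreach : Relation.ReflTransGen rel i0 k := mem_CC.mp hkCC
      have : a ∈ ch k R := (hMut a k R haR hkR).mpr hk
      exact mem_CC.mpr (hkreach.tail ⟨haR, this⟩)

end Aux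

/-- If a hedonic game satisfies top responsiveness and mutuality, then any output of the
Top Covering Algorithm places, for each player `i`, the choice set `ch i N` inside `i`'s
coalition. -/
theorem topCovering_choiceSet_subset {N : Type*} [DecidableEq N] [Fintype N]
    (pref : Pref N) (hG : IsHedonic pref) (ch : N → Finset N → Finset N)
    (hTR : TopResponsiveWith pref ch) (hMut : MutualTop ch)
    (P : Finset (Finset N)) (hrun : TCARun ch Finset.univ P) :
    ∀ i : N, ∀ S ∈ P, i ∈ S → ch i Finset.univ ⊆ S := by
  exact fun i S hS hiS =>
    tca_main hTR hMut hrun (fun j _ => Finset.subset_univ _) i S hS hiS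
end

section
/- Every hedonic game satisfying top responsiveness and mutuality admits a strictly strong Nash stable partition. -/
open Finset

/-- Every hedonic game satisfying top responsiveness and mutuality admits a strictly
strong Nash stable partition. -/
theorem topResponsive_mutual_SSNS {N : Type*} [DecidableEq N] [Fintype N]
    (pref : Pref N) (hG : IsHedonic pref)
    (h : ∃ ch : N → Finset N → Finset N, TopResponsiveWith pref ch ∧ MutualTop ch) :
    ∃ π : N → Finset N, IsPartition π ∧ StrictlyStrongNashStable pref π := by
  classical
  obtain ⟨ch, ⟨hch, htr2, htr3⟩, hmut⟩ := h
  obtain ⟨hcomp, htrans⟩ := hG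
  have hCS : ∀ (i : N) (X : Finset N), i ∈ X → (ch i X) ⊆ X ∧ i ∈ ch i X ∧
      ∀ S'' ⊆ X, i ∈ S'' → pref i (ch i X) S'' := by
    intro i X hi
    have : ch i X ∈ ChoiceSets pref i X := by rw [hch i X hi]; rfl
    exact this
  have hUniq : ∀ (i : N) (X S : Finset N), i ∈ X → S ∈ ChoiceSets pref i X → S = ch i X := by
    intro i X S hi hS
    rw [hch i X hi] at hS; exact hS
  set Top : N → Finset N := fun i => ch i Finset.univ with hTopdef
  have hTopMem : ∀ i, i ∈ Top i := fun i => (hCS i univ (mem_univ i)).2.1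
  have hTopBest : ∀ (i : N) (S : Finset N), i ∈ S → pref i (Top i) S :=
    fun i S hiS => (hCS i univ (mem_univ i)).2.2 S (subset_univ S) hiS
  have hdich : ∀ (i : N) (T : Finset N), i ∈ T →
      ch i T = Top i ∨ SPref pref i (Top i) (ch i T) := by
    intro i T hiT
    obtain ⟨hsub, hmem, hbest⟩ := hCS i T hiT
    have h1 : pref i (Top i) (ch i T) := hTopBest i _ hmem
    by_cases h2 : pref i (ch i T) (Top i)
    · left
      refine hUniq i univ (ch i T) (mem_univ i) ⟨subset_univ _, hmem, ?_⟩
      intro S'' _ hiS''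
      exact htrans i _ _ _ h2 (hTopBest i S'' hiS'')
    · right; exact ⟨h1, h2⟩
  have hchEq : ∀ (i : N) (X : Finset N), i ∈ X → Top i ⊆ X → ch i X = Top i := by
    intro i X hiX hsub
    exact (hUniq i X (Top i) hiX
      ⟨hsub, hTopMem i, fun S'' _ h'' => hTopBest i S'' h''⟩).symm
  set adj : N → N → Prop := fun i j => j ∈ Top i ∨ i ∈ Top j with hadjdef
  have hadjsymm : ∀ i j, adj i j → adj j i := fun i j h => h.elim Or.inr Or.inl
  set R : N → N → Prop := fun i j => Relation.ReflTransGen adj i j with hRdef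
  have hRsymm : ∀ i j, R i j → R j i := by
    intro i j h
    induction h with
    | refl => exact Relation.ReflTransGen.refl
    | tail _ h₂ ih => exact Relation.ReflTransGen.head (hadjsymm _ _ h₂) ih
  set π : N → Finset N := fun i => univ.filter (R i) with hπdef
  have hmemπ : ∀ i j, j ∈ π i ↔ R i j := by
    intro i j; simp [hπdef]
  have hπpart : IsPartition π := by
    constructor
    · intro i; exact (hmemπ i i).mpr Relation.ReflTransGen.refl
    · intro i j hj
      rw [hmemπ] at hj
      ext k
      rw [hmemπ, hmemπ]
      constructor
      · intro hk; exact Relation.ReflTransGen.trans hj hk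
      · intro hk; exact Relation.ReflTransGen.trans (hRsymm _ _ hj) hk
  have hTopπ : ∀ i, Top i ⊆ π i := by
    intro i j hj
    rw [hmemπ]
    exact Relation.ReflTransGen.single (Or.inl hj)
  refine ⟨π, hπpart, ?_⟩
  intro H hblk
  obtain ⟨hHne, π', hπ'part, hre, hweak, i₀, hi₀, hstrict⟩ := hblk
  obtain ⟨hne', hreach⟩ := hre
  have hchπ : ∀ i, ch i (π i) = Top i := fun i =>
    hchEq i (π i) (hπpart.1 i) (hTopπ i)
  have hA : ∀ i ∈ H, ch i (π' i) = Top i := by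
    intro i hiH
    have hiπ' : i ∈ π' i := hπ'part.1 i
    rcases hdich i (π' i) hiπ' with h1 | h1
    · exact h1
    · exfalso
      have h2 : SPref pref i (ch i (π i)) (ch i (π' i)) := by rw [hchπ]; exact h1
      have h3 := htr2 i (π i) (π' i) (hπpart.1 i) hiπ' h2
      exact h3.2 (hweak i hiH)
  have hB : ∀ i ∈ H, Top i ⊆ π' i := by
    intro i hiH
    rw [← hA i hiH]
    exact (hCS i (π' i) (hπ'part.1 i)).1
  have hclose : ∀ i ∈ H, π i ⊆ π' i := by
    intro i hiH j hj
    rw [hmemπ] at hj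
    induction hj with
    | refl => exact hπ'part.1 i
    | @tail j k hij hjk ih =>
      by_cases hjk' : j = k
      · rwa [← hjk']
      have hπ'j : π' j = π' i := hπ'part.2 i j ih
      have hadjn : k ∈ Top j := by
        rcases hjk with h' | h'
        · exact h'
        · exact (hmut k j univ (mem_univ k) (mem_univ j)).mpr h'
      by_cases hjH : j ∈ H
      · have := hB j hjH hadjn
        rwa [hπ'j] at this
      by_cases hkH : k ∈ H
      · have hjk2 : j ∈ Top k := (hmut k j univ (mem_univ k) (mem_univ j)).mp hadjn
        have hjπ'k : j ∈ π' k := hB k hkH hjk2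
        have heqk : π' j = π' k := hπ'part.2 k j hjπ'k
        have hk : k ∈ π' k := hπ'part.1 k
        rwa [← heqk, hπ'j] at hk
      · have hkπj : k ∈ π j := by
          rw [hmemπ]; exact Relation.ReflTransGen.single hjk
        have hπjk : π j = π k := (hπpart.2 j k hkπj).symm
        have heqk : π' j = π' k := (hreach j k hjH hkH hjk').mp hπjk
        have hk : k ∈ π' k := hπ'part.1 k
        rwa [← heqk, hπ'j] at hk
  have hsub : π i₀ ⊆ π' i₀ := hclose i₀ hi₀
  have hpref : pref i₀ (π i₀) (π' i₀) := by
    rcases hsub.ssubset_or_eq with hss | heq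
    · have hcheq : ch i₀ (π i₀) = ch i₀ (π' i₀) := by
        rw [hchπ, hA i₀ hi₀]
      exact (htr3 i₀ (π i₀) (π' i₀) (hπpart.1 i₀) (hπ'part.1 i₀) hcheq hss).1
    · rw [heq]
      rcases hcomp i₀ (π' i₀) (π' i₀) (hπ'part.1 i₀) (hπ'part.1 i₀) with h' | h'
      · exact h'
      · exact h'
  exact hstrict.2 hpref
end

section
/- Every hedonic game satisfying bottom responsiveness admits an individually stable partition. -/
open Finset

section BRProof

variable {N : Type*} [DecidableEq N] [Fintype N]

/-- Under bottom responsiveness, for any player `i` and coalition `X ∋ i`, either the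
singleton `{i}` is an avoid set of `X`, or `i` strictly prefers `{i}` to `X`. -/
lemma singleton_avoid_or_strict (pref : Pref N) (hG : IsHedonic pref)
    (hBR : BottomResponsive pref) (i : N) (X : Finset N) (hiX : i ∈ X) :
    ({i} : Finset N) ∈ AvoidSets pref i X ∨ SPref pref i {i} X := by
  by_cases h : ∀ W ⊆ X, i ∈ W → pref i W ({i} : Finset N)
  · exact Or.inl ⟨Finset.singleton_subset_iff.mpr hiX, Finset.mem_singleton_self i, h⟩
  · push_neg at h
    obtain ⟨W, hWX, hiW, hWnp⟩ := h
    refine Or.inr (hBR.1 i {i} X (Finset.mem_singleton_self i) hiX ?_)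
    intro X' hX' Y' hY'
    have hX'eq : X' = ({i} : Finset N) :=
      Finset.Subset.antisymm hX'.1 (Finset.singleton_subset_iff.mpr hX'.2.1)
    subst hX'eq
    refine ⟨hY'.2.2 {i} (Finset.singleton_subset_iff.mpr hiX) (Finset.mem_singleton_self i), ?_⟩
    intro hc
    exact hWnp (hG.2 i W Y' {i} (hY'.2.2 W hWX hiW) hc)

/-- reflexivity of a hedonic preference -/
lemma pref_refl (pref : Pref N) (hG : IsHedonic pref) (i : N) (X : Finset N) (hiX : i ∈ X) :
    pref i X X := (hG.1 i X X hiX hiX).elim id id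

end BRProof

/-- Every hedonic game satisfying bottom responsiveness admits an individually stable
partition. -/
theorem bottomResponsive_IS {N : Type*} [DecidableEq N] [Fintype N]
    (pref : Pref N) (hG : IsHedonic pref) (hBR : BottomResponsive pref) :
    ∃ π : N → Finset N, IsPartition π ∧ IndividuallyStable pref π := by
  classical
  -- the set of individually rational partitions
  set P : (N → Finset N) → Prop :=
    fun ρ => IsPartition ρ ∧ ∀ j, pref j (ρ j) {j} with hP
  have hne : (Finset.univ.filter P).Nonempty := by
    refine ⟨fun i => {i}, Finset.mem_filter.mpr ⟨Finset.mem_univ _, ?_, ?_⟩⟩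
    · constructor
      · intro i; exact Finset.mem_singleton_self i
      · intro i j hj
        have : j = i := Finset.mem_singleton.mp hj
        rw [this]
    · intro j; exact pref_refl pref hG j {j} (Finset.mem_singleton_self j)
  obtain ⟨π, hπmem, hmax⟩ :=
    Finset.exists_max_image (Finset.univ.filter P) (fun ρ => ∑ j, (ρ j).card) hne
  obtain ⟨hπpart, hπIR⟩ : P π := (Finset.mem_filter.mp hπmem).2
  refine ⟨π, hπpart, ?_⟩
  intro i T hT hiT hdev
  obtain ⟨hstrict, happr⟩ := hdev
  rcases hT with rfl | ⟨j₀, hj₀⟩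
  · -- deviation to the empty coalition contradicts individual rationality
    have hins : insert i (∅ : Finset N) = {i} := by simp
    rw [hins] at hstrict
    exact hstrict.2 (hπIR i)
  · -- deviation to an existing coalition T = π j₀
    set S : Finset N := π i with hS
    set T' : Finset N := insert i T with hT'
    have hiS : i ∈ S := hπpart.1 i
    have hiT' : i ∈ T' := Finset.mem_insert_self i T
    have hmemT : ∀ j ∈ T, π j = T := by
      intro j hj
      rw [← hj₀]
      exact hπpart.2 j₀ j (by rw [hj₀]; exact hj)
    have hdisj : ∀ k, k ∈ S → k ∉ T := by
      intro k hkS hkT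
      apply hiT
      have h1 : π k = π i := hπpart.2 i k hkS
      have h2 : π k = T := hmemT k hkT
      rw [← h2, h1]; exact hiS
    have hIRS : pref i S {i} := hπIR i
    -- {i} is an avoid set of S
    have hAvS : ({i} : Finset N) ∈ AvoidSets pref i S := by
      rcases singleton_avoid_or_strict pref hG hBR i S hiS with h | h
      · exact h
      · exact absurd hIRS h.2
    -- {i} is an avoid set of T'
    have hAvT' : ({i} : Finset N) ∈ AvoidSets pref i T' := by
      rcases singleton_avoid_or_strict pref hG hBR i T' hiT' with h | h
      · exact h
      · exact absurd (hG.2 i S {i} T' hIRS h.1) hstrict.2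
    -- the new coalition is strictly larger
    have hcard : S.card < T'.card := by
      by_contra hle
      push_neg at hle
      exact hstrict.2 (hBR.2 i S T' hiS hiT' ⟨{i}, hAvS, hAvT'⟩ hle)
    -- the partition after the deviation
    set π₁ : N → Finset N := fun j => if j ∈ T' then T' else if j ∈ S then S.erase i else π j
      with hπ₁
    have hπ₁T' : ∀ j ∈ T', π₁ j = T' := by
      intro j hj; simp only [hπ₁]; rw [if_pos hj]
    have hST' : ∀ j, j ∈ S → j ≠ i → j ∉ T' := by
      intro j hjS hji hjT'
      rcases Finset.mem_insert.mp hjT' with h | h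
      · exact hji h
      · exact hdisj j hjS h
    have hπ₁S : ∀ j, j ∈ S → j ≠ i → π₁ j = S.erase i := by
      intro j hjS hji
      simp only [hπ₁]
      rw [if_neg (hST' j hjS hji), if_pos hjS]
    have hπ₁other : ∀ j, j ∉ T' → j ∉ S → π₁ j = π j := by
      intro j h1 h2
      simp only [hπ₁]
      rw [if_neg h1, if_neg h2]
    have hmemS : ∀ j ∈ S, π j = S := by
      intro j hj; exact hπpart.2 i j hj
    -- π₁ is a partition
    have hπ₁part : IsPartition π₁ := by
      constructor
      · intro j
        by_cases h1 : j ∈ T'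
        · rw [hπ₁T' j h1]; exact h1
        · by_cases h2 : j ∈ S
          · have hji : j ≠ i := by
              intro h; rw [h] at h1; exact h1 hiT'
            rw [hπ₁S j h2 hji]
            exact Finset.mem_erase.mpr ⟨hji, h2⟩
          · rw [hπ₁other j h1 h2]; exact hπpart.1 j
      · intro a b hb
        by_cases ha1 : a ∈ T'
        · rw [hπ₁T' a ha1] at hb ⊢
          exact hπ₁T' b hb
        · by_cases ha2 : a ∈ S
          · have hai : a ≠ i := by
              intro h; rw [h] at ha1; exact ha1 hiT'
            rw [hπ₁S a ha2 hai] at hb ⊢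
            have hbS : b ∈ S := Finset.mem_of_mem_erase hb
            have hbi : b ≠ i := Finset.ne_of_mem_erase hb
            exact hπ₁S b hbS hbi
          · rw [hπ₁other a ha1 ha2] at hb ⊢
            have hba : π b = π a := hπpart.2 a b hb
            have hbT' : b ∉ T' := by
              intro hbT'
              rcases Finset.mem_insert.mp hbT' with h | h
              · rw [h] at hba
                exact ha2 (by rw [hS, hba]; exact hπpart.1 a)
              · have : π b = T := hmemT b h
                have haT : a ∈ T := by
                  rw [← this, hba]; exact hπpart.1 a
                exact ha1 (Finset.mem_insert_of_mem haT)
            have hbS : b ∉ S := by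
              intro hbS
              have hpbS : π b = S := hmemS b hbS
              have hSa : S = π a := by rw [← hpbS, hba]
              exact ha2 (by rw [hSa]; exact hπpart.1 a)
            rw [hπ₁other b hbT' hbS]
            exact hba
    -- π₁ is individually rational
    have hπ₁IR : ∀ j, pref j (π₁ j) {j} := by
      intro j
      by_cases h1 : j ∈ T'
      · rw [hπ₁T' j h1]
        rcases Finset.mem_insert.mp h1 with h | h
        · rw [h]
          exact hG.2 i T' S {i} hstrict.1 hIRS
        · have hIRj : pref j T {j} := by
            have := hπIR j
            rwa [hmemT j h] at this
          exact hG.2 j T' T {j} (happr j h) hIRj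
      · by_cases h2 : j ∈ S
        · have hji : j ≠ i := by
            intro h; rw [h] at h1; exact h1 hiT'
          rw [hπ₁S j h2 hji]
          have hjer : j ∈ S.erase i := Finset.mem_erase.mpr ⟨hji, h2⟩
          have hIRj : pref j S {j} := by
            have := hπIR j
            rwa [hmemS j h2] at this
          have hAvjS : ({j} : Finset N) ∈ AvoidSets pref j S := by
            rcases singleton_avoid_or_strict pref hG hBR j S h2 with h | h
            · exact h
            · exact absurd hIRj h.2
          have hAv1 : ({j} : Finset N) ∈ AvoidSets pref j (S.erase i) := by
            refine ⟨Finset.singleton_subset_iff.mpr hjer, Finset.mem_singleton_self j, ?_⟩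
            intro W hW hjW
            exact hAvjS.2.2 W (hW.trans (Finset.erase_subset i S)) hjW
          have hAv2 : ({j} : Finset N) ∈ AvoidSets pref j {j} := by
            refine ⟨Finset.Subset.refl _, Finset.mem_singleton_self j, ?_⟩
            intro W hW hjW
            have : W = ({j} : Finset N) :=
              Finset.Subset.antisymm hW (Finset.singleton_subset_iff.mpr hjW)
            rw [this]
            exact pref_refl pref hG j {j} (Finset.mem_singleton_self j)
          refine hBR.2 j (S.erase i) {j} hjer (Finset.mem_singleton_self j)
            ⟨{j}, hAv1, hAv2⟩ ?_
          rw [Finset.card_singleton]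
          exact Finset.card_pos.mpr ⟨j, hjer⟩
        · rw [hπ₁other j h1 h2]
          exact hπIR j
    -- the total size sum strictly increases, contradicting maximality
    have hΦ : (∑ j, (π j).card) < ∑ j, (π₁ j).card := by
      have hdisjTS : Disjoint T' (S.erase i) := by
        rw [Finset.disjoint_left]
        intro k hk1 hk2
        rcases Finset.mem_insert.mp hk1 with h | h
        · exact (Finset.ne_of_mem_erase hk2) h
        · exact hdisj k (Finset.mem_of_mem_erase hk2) h
      set D : Finset N := T' ∪ S.erase i with hD
      have hsplit : ∀ f : N → ℕ,
          (∑ j, f j) = (∑ j ∈ Finset.univ \ D, f j) + ((∑ j ∈ T', f j) + ∑ j ∈ S.erase i, f j) := by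
        intro f
        rw [← Finset.sum_union hdisjTS, ← hD, Finset.sum_sdiff (Finset.subset_univ D)]
      rw [hsplit (fun j => (π j).card), hsplit (fun j => (π₁ j).card)]
      have houter : (∑ j ∈ Finset.univ \ D, (π₁ j).card) = ∑ j ∈ Finset.univ \ D, (π j).card := by
        refine Finset.sum_congr rfl ?_
        intro j hj
        have hjD : j ∉ D := (Finset.mem_sdiff.mp hj).2
        have hj1 : j ∉ T' := fun h => hjD (Finset.mem_union_left _ h)
        have hj2 : j ∉ S := by
          intro h
          have hji : j ≠ i := by
            intro he; rw [he] at hj1; exact hj1 hiT'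
          exact hjD (Finset.mem_union_right _ (Finset.mem_erase.mpr ⟨hji, h⟩))
        rw [hπ₁other j hj1 hj2]
      rw [houter]
      have hsum1 : (∑ j ∈ T', (π₁ j).card) = T'.card * T'.card := by
        rw [Finset.sum_congr rfl (fun j hj => by rw [hπ₁T' j hj]), Finset.sum_const,
          smul_eq_mul]
      have hsum2 : (∑ j ∈ S.erase i, (π₁ j).card) = (S.erase i).card * (S.erase i).card := by
        rw [Finset.sum_congr rfl (fun j hj => by
          rw [hπ₁S j (Finset.mem_of_mem_erase hj) (Finset.ne_of_mem_erase hj)]),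
          Finset.sum_const, smul_eq_mul]
      have hsum3 : (∑ j ∈ T', (π j).card) = S.card + T.card * T.card := by
        rw [hT', Finset.sum_insert hiT, Finset.sum_congr rfl (fun j hj => by rw [hmemT j hj]),
          Finset.sum_const, smul_eq_mul]
      have hsum4 : (∑ j ∈ S.erase i, (π j).card) = (S.erase i).card * S.card := by
        rw [Finset.sum_congr rfl (fun j hj => by rw [hmemS j (Finset.mem_of_mem_erase hj)]),
          Finset.sum_const, smul_eq_mul]
      rw [hsum1, hsum2, hsum3, hsum4]
      have he : (S.erase i).card + 1 = S.card := by
        rw [Finset.card_erase_of_mem hiS]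
        have : 1 ≤ S.card := Finset.card_pos.mpr ⟨i, hiS⟩
        omega
      have hT'card : T'.card = T.card + 1 := Finset.card_insert_of_notMem hiT
      rw [hT'card] at hcard ⊢
      apply Nat.add_lt_add_left
      nlinarith [he, hcard]
    have hle := hmax π₁ (Finset.mem_filter.mpr ⟨Finset.mem_univ _, hπ₁part, hπ₁IR⟩)
    omega
end

section
/- Every hedonic game satisfying bottom responsiveness admits a strongly individually stable (hence core stable) partition. -/
open Finset

/-!
Call a coalition clean if being alone is a worst subcoalition for each of its members. Bottom
responsiveness makes clean coalitions rigid: if `i` weakly prefers `S` to a clean coalition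
containing it, then being alone is also a worst subcoalition of `S` for `i`, and if the
preference is strict then `S` is strictly larger.

Build a partition greedily, repeatedly removing a largest clean coalition from the remaining
players, and rank each player by the round in which it is removed. Given a deviation, every new
coalition that contains a deviator is clean, so it is no larger than the old coalition of its
lowest-ranked member `m`. Deviators strictly grow their coalition, hence have rank above `m`, so
the old coalition of `m` contains no deviator; it stays together and is joined by a deviator,
a strict enlargement that contradicts the bound. A core-blocking coalition is a particular
strongly individual deviation.
-/

section

variable {N : Type*} {pref : Pref N}

def IsClean (pref : Pref N) (C : Finset N) : Prop :=
  ∀ i ∈ C, ({i} : Finset N) ∈ AvoidSets pref i C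

lemma isClean_singleton (hG : IsHedonic pref) (i : N) : IsClean pref {i} := by
  intro j hj
  obtain rfl := mem_singleton.1 hj
  refine ⟨Subset.refl _, mem_singleton_self j, fun S hS hjS => ?_⟩
  obtain rfl := (Finset.Nonempty.subset_singleton_iff ⟨j, hjS⟩).1 hS
  exact (hG.1 j {j} {j} hjS hjS).elim id id

namespace BottomResponsive

lemma singleton_mem_avoidSets_of_pref (hBR : BottomResponsive pref) (hG : IsHedonic pref)
    {i : N} {C S : Finset N} (hC : ({i} : Finset N) ∈ AvoidSets pref i C) (hiS : i ∈ S)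
    (hSC : pref i S C) : ({i} : Finset N) ∈ AvoidSets pref i S := by
  refine ⟨singleton_subset_iff.2 hiS, mem_singleton_self i, ?_⟩
  by_contra! hT
  obtain ⟨T, hTS, hiT, hTi⟩ := hT
  -- Every worst subset of `S` is then strictly below `{i}`, while those of `C` are not.
  have hCS : SPref pref i C S := by
    refine hBR.1 i C S (singleton_subset_iff.1 hC.1) hiS fun X' hX' Y' hY' => ?_
    have hX'i : pref i X' {i} := hC.2.2 X' hX'.1 hX'.2.1
    have hY'i : ¬ pref i Y' {i} := fun h => hTi (hG.2 i T Y' {i} (hY'.2.2 T hTS hiT) h)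
    have hiY' : pref i {i} Y' := (hG.1 i {i} Y' (mem_singleton_self i) hY'.2.1).resolve_right hY'i
    exact ⟨hG.2 i X' {i} Y' hX'i hiY', fun h => hY'i (hG.2 i Y' X' {i} h hX'i)⟩
  exact hCS.2 hSC

lemma card_lt_of_sPref (hBR : BottomResponsive pref) (hG : IsHedonic pref)
    {i : N} {C S : Finset N} (hC : ({i} : Finset N) ∈ AvoidSets pref i C) (hiS : i ∈ S)
    (hSC : SPref pref i S C) : C.card < S.card := by
  by_contra! hcard
  exact hSC.2 <| hBR.2 i C S (singleton_subset_iff.1 hC.1) hiS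
    ⟨{i}, hC, hBR.singleton_mem_avoidSets_of_pref hG hC hiS hSC.1⟩ hcard

end BottomResponsive

theorem StronglyIndividuallyStable.coreStable [DecidableEq N] {π : N → Finset N}
    (hπ : IsPartition π) (h : StronglyIndividuallyStable pref π) : CoreStable pref π := by
  rintro S ⟨⟨s, hs⟩, hS⟩
  let π' : N → Finset N := fun i => if i ∈ S then S else π i \ S
  have hπ' : IsPartition π' := by
    refine ⟨fun i => ?_, fun i j hj => ?_⟩
    · by_cases hi : i ∈ S <;> simp [π', hi, hπ.1 i]
    · by_cases hi : i ∈ S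
      · simp_all [π']
      · simp only [π', hi, if_false, mem_sdiff] at hj ⊢
        simp [hj.2, hπ.2 i j hj.1]
  refine h S ⟨⟨s, hs⟩, π', hπ', ⟨fun heq => ?_, fun i j hi hj _ => ?_⟩, fun i hi => ?_,
    fun j ⟨i, hi, hj⟩ => ?_⟩
  · have hs' : π' s = π s := congrFun heq s
    simp only [π', hs, if_true] at hs'
    exact (hS s hs).2 (hs' ▸ (hS s hs).1)
  · simp only [π', hi, hj, if_false]
    refine ⟨fun h => h ▸ rfl, fun h => ?_⟩
    have hjπ : j ∈ π i := (mem_sdiff.1 (h ▸ mem_sdiff.2 ⟨hπ.1 j, hj⟩)).1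
    exact (hπ.2 i j hjπ).symm
  · simpa [π', hi] using hS i hi
  · have hjS : j ∈ S := by simp_all [π']
    simpa [π', hjS] using (hS j hjS).1

structure IsGreedyCleanPartition (pref : Pref N) (π : N → Finset N) (rank : N → ℕ) : Prop where
  isPartition : IsPartition π
  isClean : ∀ i, IsClean pref (π i)
  rank_eq : ∀ i j, j ∈ π i → rank j = rank i
  card_le : ∀ S, IsClean pref S → ∀ m, (∀ n ∈ S, rank m ≤ rank n) → S.card ≤ (π m).card

namespace IsGreedyCleanPartition

variable {π : N → Finset N} {rank : N → ℕ}

lemma card_le_of_rank_le (h : IsGreedyCleanPartition pref π rank) {i j : N}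
    (hij : rank i ≤ rank j) : (π j).card ≤ (π i).card :=
  h.card_le _ (h.isClean j) i fun n hn => h.rank_eq j n hn ▸ hij

lemma singleton_mem_avoidSets (h : IsGreedyCleanPartition pref π rank) (i : N) :
    ({i} : Finset N) ∈ AvoidSets pref i (π i) :=
  h.isClean i i (h.isPartition.1 i)

lemma isClean_of_forall_pref (h : IsGreedyCleanPartition pref π rank) (hG : IsHedonic pref)
    (hBR : BottomResponsive pref) {S : Finset N} (hS : ∀ n ∈ S, pref n S (π n)) :
    IsClean pref S := fun n hn =>
  hBR.singleton_mem_avoidSets_of_pref hG (h.singleton_mem_avoidSets n) hn (hS n hn)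

theorem stronglyIndividuallyStable [DecidableEq N] (h : IsGreedyCleanPartition pref π rank)
    (hG : IsHedonic pref) (hBR : BottomResponsive pref) : StronglyIndividuallyStable pref π := by
  rintro H ⟨⟨i₀, hi₀⟩, π', hπ', hreach, hstrict, hweak⟩
  let D := H.biUnion π'
  have hD : ∀ {m i}, i ∈ H → m ∈ π' i → m ∈ D := fun hi hm => mem_biUnion.2 ⟨_, hi, hm⟩
  obtain ⟨m₀, hm₀, hmin⟩ := D.exists_min_image rank ⟨i₀, hD hi₀ (hπ'.1 i₀)⟩
  have hclosed : ∀ m ∈ D, ∀ n ∈ π' m, n ∈ D ∧ π' n = π' m := by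
    intro m hm n hn
    obtain ⟨i, hi, hmi⟩ := mem_biUnion.1 hm
    exact ⟨hD hi (hπ'.2 i m hmi ▸ hn), hπ'.2 m n hn⟩
  have hcard : ∀ m ∈ D, (π' m).card ≤ (π m₀).card := by
    intro m hm
    refine h.card_le _ (h.isClean_of_forall_pref hG hBR fun n hn => ?_) m₀
      fun n hn => hmin n (hclosed m hm n hn).1
    obtain ⟨i, hi, hni⟩ := mem_biUnion.1 (hclosed m hm n hn).1
    exact (hclosed m hm n hn).2 ▸ hweak n ⟨i, hi, hni⟩
  have hrank : ∀ j ∈ H, rank m₀ < rank j := by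
    intro j hj
    by_contra! hle
    have hgrow := hBR.card_lt_of_sPref hG (h.singleton_mem_avoidSets j) (hπ'.1 j) (hstrict j hj)
    have hm₀j := h.card_le_of_rank_le hle
    have hj_new := hcard j (hD hj (hπ'.1 j))
    omega
  have hnotH : ∀ n ∈ π m₀, n ∉ H := fun n hn hnH =>
    (hrank n hnH).ne (h.rank_eq m₀ n hn).symm
  have hsub : π m₀ ⊆ π' m₀ := by
    intro n hn
    by_cases hnm : n = m₀
    · exact hnm ▸ hπ'.1 n
    · have hstay := (hreach.2 n m₀ (hnotH n hn) (hnotH m₀ (h.isPartition.1 m₀)) hnm).1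
        (h.isPartition.2 m₀ n hn)
      exact hstay ▸ hπ'.1 n
  obtain ⟨i, hi, hm₀i⟩ := mem_biUnion.1 hm₀
  have hi_new : i ∈ π' m₀ := hπ'.2 i m₀ hm₀i ▸ hπ'.1 i
  have hi_old : i ∉ π m₀ := fun h' => hnotH i h' hi
  exact (card_lt_card ⟨hsub, fun h' => hi_old (h' hi_new)⟩).not_ge (hcard m₀ hm₀)

end IsGreedyCleanPartition

end

section Construction

variable {N : Type*} {pref : Pref N}

lemma exists_maxCleanSubset (pref : Pref N) (R : Finset N) :
    ∃ C ⊆ R, IsClean pref C ∧ ∀ C' ⊆ R, IsClean pref C' → C'.card ≤ C.card := by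
  classical
  obtain ⟨C, hC, hmax⟩ := (R.powerset.filter (IsClean pref)).exists_max_image card
    ⟨∅, mem_filter.2 ⟨empty_mem_powerset R, fun i hi => absurd hi (notMem_empty i)⟩⟩
  rw [mem_filter, mem_powerset] at hC
  exact ⟨C, hC.1, hC.2, fun C' hC' hclean => hmax C' (mem_filter.2 ⟨mem_powerset.2 hC', hclean⟩)⟩

noncomputable def maxCleanSubset (pref : Pref N) (R : Finset N) : Finset N :=
  (exists_maxCleanSubset pref R).choose

lemma maxCleanSubset_subset (pref : Pref N) (R : Finset N) : maxCleanSubset pref R ⊆ R :=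
  (exists_maxCleanSubset pref R).choose_spec.1

lemma isClean_maxCleanSubset (pref : Pref N) (R : Finset N) :
    IsClean pref (maxCleanSubset pref R) :=
  (exists_maxCleanSubset pref R).choose_spec.2.1

lemma card_le_card_maxCleanSubset {R C : Finset N} (hCR : C ⊆ R) (hC : IsClean pref C) :
    C.card ≤ (maxCleanSubset pref R).card :=
  (exists_maxCleanSubset pref R).choose_spec.2.2 C hCR hC

lemma maxCleanSubset_nonempty (hG : IsHedonic pref) {R : Finset N} (hR : R.Nonempty) :
    (maxCleanSubset pref R).Nonempty := by
  obtain ⟨i, hi⟩ := hR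
  have hcard := card_le_card_maxCleanSubset (singleton_subset_iff.2 hi) (isClean_singleton hG i)
  rw [card_singleton] at hcard
  exact card_pos.1 hcard

variable [DecidableEq N] [Fintype N]

noncomputable def cleanStage (pref : Pref N) : ℕ → Finset N
  | 0 => univ
  | k + 1 => cleanStage pref k \ maxCleanSubset pref (cleanStage pref k)

lemma cleanStage_antitone (pref : Pref N) : Antitone (cleanStage pref) :=
  antitone_nat_of_succ_le fun _ => sdiff_subset

lemma exists_mem_maxCleanSubset_cleanStage (hG : IsHedonic pref) (i : N) :
    ∃ k, i ∈ maxCleanSubset pref (cleanStage pref k) := by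
  by_contra! h
  have hmem : ∀ k, i ∈ cleanStage pref k := by
    intro k
    induction k with
    | zero => exact mem_univ i
    | succ k ih => exact mem_sdiff.2 ⟨ih, h k⟩
  obtain ⟨k, hk⟩ := WellFounded.not_rel_apply_succ (r := (· < ·)) (cleanStage pref)
  exact hk <| sdiff_ssubset (maxCleanSubset_subset pref _)
    (maxCleanSubset_nonempty hG ⟨i, hmem k⟩)

noncomputable def cleanRank (hG : IsHedonic pref) (i : N) : ℕ :=
  Nat.find (exists_mem_maxCleanSubset_cleanStage hG i)

lemma mem_maxCleanSubset_cleanStage_cleanRank (hG : IsHedonic pref) (i : N) :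
    i ∈ maxCleanSubset pref (cleanStage pref (cleanRank hG i)) :=
  Nat.find_spec (exists_mem_maxCleanSubset_cleanStage hG i)

lemma cleanRank_eq_of_mem (hG : IsHedonic pref) {i : N} {k : ℕ}
    (h : i ∈ maxCleanSubset pref (cleanStage pref k)) : cleanRank hG i = k := by
  refine le_antisymm (Nat.find_min' _ h) (not_lt.1 fun hlt => ?_)
  have hmem := cleanStage_antitone pref (Nat.succ_le_of_lt hlt) (maxCleanSubset_subset pref _ h)
  exact (mem_sdiff.1 hmem).2 (mem_maxCleanSubset_cleanStage_cleanRank hG i)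

lemma isGreedyCleanPartition_cleanRank (hG : IsHedonic pref) :
    IsGreedyCleanPartition pref (fun i => maxCleanSubset pref (cleanStage pref (cleanRank hG i)))
      (cleanRank hG) := by
  have hrank : ∀ i j, j ∈ maxCleanSubset pref (cleanStage pref (cleanRank hG i)) →
      cleanRank hG j = cleanRank hG i := fun _ _ => cleanRank_eq_of_mem hG
  refine ⟨⟨mem_maxCleanSubset_cleanStage_cleanRank hG, fun i j hj =>
    congrArg (fun k => maxCleanSubset pref (cleanStage pref k)) (hrank i j hj)⟩,
    fun i => isClean_maxCleanSubset pref _, hrank, fun S hS m hm => ?_⟩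
  refine card_le_card_maxCleanSubset (fun n hn => ?_) hS
  exact cleanStage_antitone pref (hm n hn)
    (maxCleanSubset_subset pref _ (mem_maxCleanSubset_cleanStage_cleanRank hG n))

end Construction

/-- Every hedonic game satisfying bottom responsiveness admits a strongly individually
stable (hence core stable) partition. -/
theorem bottomResponsive_SIS {N : Type*} [DecidableEq N] [Fintype N]
    (pref : Pref N) (hG : IsHedonic pref) (hBR : BottomResponsive pref) :
    ∃ π : N → Finset N, IsPartition π ∧ StronglyIndividuallyStable pref π ∧
      CoreStable pref π := by
  have hπ := isGreedyCleanPartition_cleanRank hG (pref := pref)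
  have hSIS := hπ.stronglyIndividuallyStable hG hBR
  exact ⟨_, hπ.isPartition, hSIS, hSIS.coreStable hπ.isPartition⟩
end

section
/- In a hedonic game satisfying bottom responsiveness, if π is an individually rational partition and a player i strictly improves by moving to a coalition S ∈ π ∪ {∅} with all members of S weakly approving, then the resulting partition π' is individually rational and satisfies π' >̇ π in the decreasing-size lexicographic order; consequently |S ∪ {i}| > |π(i)|. -/
open Finset

/-- Sizes of the coalitions of a coalition structure, sorted in decreasing order. -/
def sizes {N : Type*} (P : Finset (Finset N)) : List ℕ :=
  (Multiset.sort (α := ℕ) (P.val.map Finset.card) (· ≤ ·)).reverse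

/-- Lexicographic comparison of (decreasingly sorted) size vectors: the paper's `>̇`. -/
def GdotL (l1 l2 : List ℕ) : Prop :=
  ∃ i : ℕ, i < l1.length ∧ i < l2.length ∧ l2.getD i 0 < l1.getD i 0 ∧
    ∀ j < i, l1.getD j 0 = l2.getD j 0

def Gdot {N : Type*} (P Q : Finset (Finset N)) : Prop := GdotL (sizes P) (sizes Q)

/-- The paper's `≐`: same number of coalitions with equal sorted size vectors. -/
def Doteq {N : Type*} (P Q : Finset (Finset N)) : Prop := sizes P = sizes Q

/-- The paper's `≥̇`. -/
def Gdoteq {N : Type*} (P Q : Finset (Finset N)) : Prop := Gdot P Q ∨ Doteq P Q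

def IsPartitionSet {N : Type*} [DecidableEq N] [Fintype N] (P : Finset (Finset N)) : Prop :=
  (∀ S ∈ P, S.Nonempty) ∧ (∀ S ∈ P, ∀ T ∈ P, S ≠ T → Disjoint S T) ∧
    P.biUnion id = Finset.univ

/-!
As `{i}` is a worst subset of `π i` and `i` weakly prefers `insert i S`, the first axiom of bottom
responsiveness makes `{i}` a worst subset of `insert i S` as well (likewise `{j}` for each
`j ∈ S`, who weakly prefers `insert i S` to `S`). The two coalitions of `i` then share a worst
subset, so by the second axiom the strict preference of `i` forces `|π i| < |insert i S|`.
Hence the move leaves every coalition of size `> |S|` untouched and adds one of size `|S| + 1`,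
while `π` has a coalition of size `≤ |S|`: the sorted size list of the new partition first
differs from the old one by an entry `|S| + 1` in place of one `≤ |S|`.
-/

section AvoidSets

variable {N : Type*} {pref : Pref N} {j : N} {X Y : Finset N}

theorem singleton_mem_avoidSets_of_subset (hX : ({j} : Finset N) ∈ AvoidSets pref j X)
    (hYX : Y ⊆ X) (hjY : j ∈ Y) : ({j} : Finset N) ∈ AvoidSets pref j Y :=
  ⟨singleton_subset_iff.2 hjY, mem_singleton_self j,
    fun T hTY hjT => hX.2.2 T (hTY.trans hYX) hjT⟩

/-- If some `T ⊆ Y` were strictly worse than `{j}`, every worst subset of `Y` would be strictly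
worse than every worst subset of `X` (all of which are as bad as `{j}`), and bottom
responsiveness would give `X ≻ Y`. -/
theorem BottomResponsive.singleton_mem_avoidSets_of_pref_s15 (hBR : BottomResponsive pref)
    (hG : IsHedonic pref) (hX : ({j} : Finset N) ∈ AvoidSets pref j X) (hjY : j ∈ Y)
    (hYX : pref j Y X) : ({j} : Finset N) ∈ AvoidSets pref j Y := by
  refine ⟨singleton_subset_iff.2 hjY, mem_singleton_self j, fun T hTY hjT => ?_⟩
  by_contra hTj
  have hsingT : pref j {j} T := (hG.1 j T {j} hjT (mem_singleton_self j)).resolve_left hTj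
  refine (hBR.1 j X Y (hX.1 (mem_singleton_self j)) hjY fun X' hX' Y' hY' => ?_).2 hYX
  have hX'j : pref j X' {j} := hX.2.2 X' hX'.1 hX'.2.1
  have hTY' : pref j T Y' := hY'.2.2 T hTY hjT
  refine ⟨hG.2 _ _ _ _ hX'j (hG.2 _ _ _ _ hsingT hTY'), fun hY'X' => hTj ?_⟩
  exact hG.2 _ _ _ _ hTY' (hG.2 _ _ _ _ hY'X' hX'j)

theorem BottomResponsive.card_lt_of_sPref_s15 (hBR : BottomResponsive pref)
    (hX : ({j} : Finset N) ∈ AvoidSets pref j X) (hY : ({j} : Finset N) ∈ AvoidSets pref j Y)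
    (hYX : SPref pref j Y X) : X.card < Y.card := by
  by_contra! hle
  exact hYX.2 (hBR.2 j X Y (hX.1 (mem_singleton_self j)) (hY.1 (mem_singleton_self j))
    ⟨{j}, hX, hY⟩ hle)

end AvoidSets

theorem gdotL_append_cons_of_lt {p s t : List ℕ} {a b : ℕ} (hba : b < a) :
    GdotL (p ++ a :: s) (p ++ b :: t) := by
  refine ⟨p.length, by simp, by simp, ?_, fun j hj => ?_⟩
  · simpa [List.getD_append_right] using hba
  · rw [List.getD_append _ _ _ _ hj, List.getD_append _ _ _ _ hj]

theorem Multiset.reverse_sort_add {α : Type*} [LinearOrder α] {A B : Multiset α}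
    (h : ∀ a ∈ A, ∀ b ∈ B, b ≤ a) :
    (sort (A + B) (· ≤ ·)).reverse = (sort A (· ≤ ·)).reverse ++ (sort B (· ≤ ·)).reverse := by
  refine List.Perm.eq_of_sortedGE (pairwise_sort _ _).sortedLE.reverse ?_ ?_
  · refine (List.pairwise_append.2 ⟨?_, ?_, fun a ha b hb => ?_⟩).sortedGE
    · exact List.pairwise_reverse.2 (pairwise_sort _ _)
    · exact List.pairwise_reverse.2 (pairwise_sort _ _)
    · simp only [List.mem_reverse, mem_sort] at ha hb
      exact h a ha b hb
  · rw [← coe_eq_coe, ← coe_add, coe_reverse, coe_reverse, coe_reverse, sort_eq, sort_eq, sort_eq]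

/-- Split both sorted lists at the threshold `v`: they agree above `v + 1`, after which `B` has
an extra `v + 1` facing an entry `≤ v` of `A`. -/
theorem gdotL_of_filter_lt_eq_cons {A B : Multiset ℕ} {v : ℕ}
    (hB : B.filter (v < ·) = (v + 1) ::ₘ A.filter (v < ·)) (hA : ∃ x ∈ A, x ≤ v) :
    GdotL (Multiset.sort B (· ≤ ·)).reverse (Multiset.sort A (· ≤ ·)).reverse := by
  have split (M : Multiset ℕ) : (Multiset.sort M (· ≤ ·)).reverse =
      (Multiset.sort (M.filter (v < ·)) (· ≤ ·)).reverse ++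
        (Multiset.sort (M.filter (¬ v < ·)) (· ≤ ·)).reverse := by
    conv_lhs => rw [← Multiset.filter_add_not (v < ·) M]
    refine Multiset.reverse_sort_add fun a ha b hb => ?_
    simp only [Multiset.mem_filter] at ha hb
    omega
  have top : (Multiset.sort ((v + 1) ::ₘ A.filter (v < ·)) (· ≤ ·)).reverse =
      (Multiset.sort (A.filter (v < ·)) (· ≤ ·)).reverse ++ [v + 1] := by
    rw [Multiset.sort_cons _ _ _ fun b hb => by simp only [Multiset.mem_filter] at hb; omega,
      List.reverse_cons]
  obtain ⟨x, t, hxt⟩ :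
      ∃ x t, (Multiset.sort (A.filter (¬ v < ·)) (· ≤ ·)).reverse = x :: t := by
    obtain ⟨x, hxA, hxv⟩ := hA
    refine List.exists_cons_of_ne_nil (List.ne_nil_of_mem (a := x) ?_)
    simp [hxA, hxv]
  have hx : x ≤ v := by
    have : x ∈ A.filter (¬ v < ·) := by
      rw [← Multiset.mem_sort (· ≤ ·), ← List.mem_reverse, hxt]; exact List.mem_cons_self
    simpa using (Multiset.mem_filter.1 this).2
  rw [split A, split B, hB, top, hxt, List.append_assoc, List.singleton_append]
  exact gdotL_append_cons_of_lt (by omega)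

theorem gdot_of_filter_card_lt_eq_insert {N : Type*} [DecidableEq N] {P Q : Finset (Finset N)}
    {T : Finset N} {v : ℕ} (hT : T.card = v + 1) (hTQ : T ∉ Q)
    (hP : P.filter (v < ·.card) = insert T (Q.filter (v < ·.card)))
    (hQ : ∃ U ∈ Q, U.card ≤ v) : Gdot P Q := by
  refine gdotL_of_filter_lt_eq_cons (v := v) ?_ ?_
  · have hTQ' : T ∉ Q.filter (v < ·.card) := fun h => hTQ (mem_filter.1 h).1
    rw [Multiset.filter_map, Multiset.filter_map, ← filter_val, ← filter_val]
    change (P.filter (v < ·.card)).val.map card =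
      (v + 1) ::ₘ (Q.filter (v < ·.card)).val.map card
    rw [hP, insert_val_of_notMem hTQ', Multiset.map_cons, hT]
  · obtain ⟨U, hUQ, hUv⟩ := hQ
    exact ⟨U.card, Multiset.mem_map_of_mem _ hUQ, hUv⟩

section Deviation

variable {N : Type*} [DecidableEq N]

def deviation (π : N → Finset N) (i : N) (S : Finset N) : N → Finset N :=
  fun j => if j ∈ insert i S then insert i S else (π j).erase i

variable {π : N → Finset N} {i j : N} {S : Finset N}

theorem deviation_of_mem (h : j ∈ insert i S) : deviation π i S j = insert i S := if_pos h

theorem deviation_of_notMem (h : j ∉ insert i S) : deviation π i S j = (π j).erase i := if_neg h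

theorem filter_card_lt_image_deviation [Fintype N] (hπ : IsPartition π)
    (hS : ∀ j ∈ S, π j = S) (hiS : i ∉ S) (hsmall : (π i).card ≤ S.card) :
    (univ.image (deviation π i S)).filter (S.card < ·.card) =
      insert (insert i S) ((univ.image π).filter (S.card < ·.card)) := by
  have hsmall' (j : N) (hij : i ∈ π j) : (π j).card ≤ S.card := hπ.2 j i hij ▸ hsmall
  ext T
  simp only [mem_filter, mem_insert, mem_image, mem_univ, true_and]
  constructor
  · rintro ⟨⟨j, rfl⟩, hT⟩
    by_cases hj : j ∈ insert i S
    · exact .inl (deviation_of_mem hj)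
    rw [deviation_of_notMem hj] at hT ⊢
    by_cases hij : i ∈ π j
    · have := card_erase_le (a := i) (s := π j)
      have := hsmall' j hij
      omega
    · rw [erase_eq_of_notMem hij] at hT ⊢
      exact .inr ⟨⟨j, rfl⟩, hT⟩
  · rintro (rfl | ⟨⟨j, rfl⟩, hT⟩)
    · refine ⟨⟨i, deviation_of_mem (mem_insert_self i S)⟩, ?_⟩
      rw [card_insert_of_notMem hiS]
      omega
    · have hij : i ∉ π j := fun hij => (hsmall' j hij).not_gt hT
      have hj : j ∉ insert i S := by
        intro hj
        rcases mem_insert.1 hj with rfl | hjS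
        · exact hij (hπ.1 j)
        · exact (hS j hjS ▸ hT).false
      exact ⟨⟨j, by rw [deviation_of_notMem hj, erase_eq_of_notMem hij]⟩, hT⟩

end Deviation

section IndividualRationality

variable {N : Type*} [DecidableEq N]

def IsIndividuallyRational (pref : Pref N) (π : N → Finset N) : Prop :=
  ∀ j, ({j} : Finset N) ∈ AvoidSets pref j (π j)

theorem IsIndividuallyRational.deviation {pref : Pref N} {π : N → Finset N} {i : N}
    {S : Finset N} (hIR : IsIndividuallyRational pref π) (hG : IsHedonic pref)
    (hBR : BottomResponsive pref) (hS : ∀ j ∈ S, π j = S)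
    (hi : pref i (insert i S) (π i)) (happ : ∀ j ∈ S, pref j (insert i S) S) :
    IsIndividuallyRational pref (deviation π i S) := by
  intro j
  by_cases hj : j ∈ insert i S
  · rw [deviation_of_mem hj]
    rcases mem_insert.1 hj with rfl | hjS
    · exact hBR.singleton_mem_avoidSets_of_pref_s15 hG (hIR j) hj hi
    · exact hBR.singleton_mem_avoidSets_of_pref_s15 hG (hS j hjS ▸ hIR j) hj (happ j hjS)
  · rw [deviation_of_notMem hj]
    have hji : j ≠ i := fun h => hj (h ▸ mem_insert_self i S)
    exact singleton_mem_avoidSets_of_subset (hIR j) (erase_subset i _)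
      (mem_erase.2 ⟨hji, (hIR j).1 (mem_singleton_self j)⟩)

end IndividualRationality

/-- In a bottom responsive hedonic game, if `π` is individually rational (in the
strengthened sense that `{j}` is an avoid set of `π(j)` for every `j`) and player `i`
strictly improves by moving to a coalition `S ∈ π ∪ {∅}` with all members of `S` weakly
approving, then the resulting partition `π'` is individually rational and `π' >̇ π`;
consequently `|S ∪ {i}| > |π(i)|`. -/
theorem bottomResponsive_deviation_increases {N : Type*} [DecidableEq N] [Fintype N]
    (pref : Pref N) (hG : IsHedonic pref) (hBR : BottomResponsive pref)
    (π : N → Finset N) (hπ : IsPartition π)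
    (hIR : ∀ j : N, ({j} : Finset N) ∈ AvoidSets pref j (π j))
    (i : N) (S : Finset N) (hS : S = ∅ ∨ ∃ j, π j = S) (hiS : i ∉ S)
    (himp : SPref pref i (insert i S) (π i))
    (happ : ∀ j ∈ S, pref j (insert i S) S)
    (π' : N → Finset N)
    (hπ'def : π' = fun j => if j ∈ insert i S then insert i S else (π j).erase i) :
    (∀ j : N, ({j} : Finset N) ∈ AvoidSets pref j (π' j)) ∧
    Gdot (Finset.univ.image π') (Finset.univ.image π) ∧
    (π i).card < (insert i S).card := by
  subst hπ'def
  have hSπ : ∀ j ∈ S, π j = S := by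
    rcases hS with rfl | ⟨k, rfl⟩
    · simp
    · exact hπ.2 k
  have hiAv := hBR.singleton_mem_avoidSets_of_pref_s15 hG (hIR i) (mem_insert_self i S) himp.1
  have hcard := hBR.card_lt_of_sPref_s15 (hIR i) hiAv himp
  have hsmall : (π i).card ≤ S.card := by
    rw [card_insert_of_notMem hiS] at hcard
    omega
  have hnew : insert i S ∉ univ.image π := by
    simp only [mem_image, mem_univ, true_and, not_exists]
    intro j hj
    exact hcard.ne (congrArg card ((hπ.2 j i (hj ▸ mem_insert_self i S)).trans hj))
  refine ⟨IsIndividuallyRational.deviation hIR hG hBR hSπ himp.1 happ, ?_, hcard⟩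
  exact gdot_of_filter_card_lt_eq_insert (card_insert_of_notMem hiS) hnew
    (filter_card_lt_image_deviation hπ hSπ hiS hsmall)
    ⟨π i, mem_image_of_mem π (mem_univ i), hsmall⟩
end

section
/- Every symmetric 'appreciation of friends' additively separable hedonic game satisfies top responsiveness and mutuality, and hence admits a strictly strong Nash stable partition. -/
open Finset

/-- Additively separable preferences induced by the valuation `v`. -/
def ASHGpref {N : Type*} [DecidableEq N] (v : N → N → ℤ) : Pref N := fun i S T =>
  ∑ j ∈ T.erase i, v i j ≤ ∑ j ∈ S.erase i, v i j

/-!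
A friend is worth `n = |N|` while a coalition holds at most `n - 1` enemies, so every player
ranks coalitions lexicographically: first by the number of friends, then by the (smaller)
number of enemies. Hence the unique choice set of `i` in `X` is `i` together with its friends
in `X`, and symmetry of `v` makes these choice sets mutual.

The partition into connected components of the friendship graph is strictly strong Nash
stable. A deviating player who does not get worse keeps all of its friends, and two
non-deviators that are friends stay together since non-deviators keep their grouping, so every
component ends up inside a single new coalition. A deviator therefore only gains enemies and
cannot strictly improve.
-/

namespace SimpleGraph

theorem Reachable.eq_of_forall_adj {V β : Type*} {G : SimpleGraph V} {f : V → β}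
    (h : ∀ a b, G.Adj a b → f a = f b) {u w : V} (huw : G.Reachable u w) : f u = f w := by
  rw [reachable_iff_reflTransGen] at huw
  induction huw with
  | refl => rfl
  | tail _ hab ih => exact ih.trans (h _ _ hab)

end SimpleGraph

namespace ASHG

section Utility

variable {N : Type*} [DecidableEq N]

def utility (v : N → N → ℤ) (i : N) (S : Finset N) : ℤ :=
  ∑ j ∈ S.erase i, v i j

variable {v : N → N → ℤ} {i : N} {S T : Finset N}

theorem sPref_iff : SPref (ASHGpref v) i S T ↔ utility v i T < utility v i S :=
  lt_iff_le_not_ge.symm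

theorem utility_eq_add_sum_sdiff (hST : S ⊆ T) (hi : i ∈ S) :
    utility v i T = utility v i S + ∑ j ∈ T \ S, v i j := by
  have hsdiff : T.erase i \ S.erase i = T \ S := by
    ext j
    by_cases hji : j = i
    · subst hji
      simp [hi]
    · simp [hji]
  rw [utility, utility, ← sum_sdiff (erase_subset_erase i hST), hsdiff, add_comm]

end Utility

section AppreciationOfFriends

variable {N : Type*} [DecidableEq N] [Fintype N]

def IsAppreciationOfFriends (v : N → N → ℤ) : Prop :=
  ∀ i j : N, i ≠ j → v i j = -1 ∨ v i j = (Fintype.card N : ℤ)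

def friendsIn (v : N → N → ℤ) (i : N) (S : Finset N) : Finset N :=
  (S.erase i).filter (fun j => v i j = (Fintype.card N : ℤ))

def enemiesIn (v : N → N → ℤ) (i : N) (S : Finset N) : Finset N :=
  (S.erase i).filter (fun j => ¬ v i j = (Fintype.card N : ℤ))

def friendChoice (v : N → N → ℤ) (i : N) (X : Finset N) : Finset N :=
  X.filter (fun j => j = i ∨ v i j = (Fintype.card N : ℤ))

variable {v : N → N → ℤ} {i : N} {S T X : Finset N}

theorem mem_friendChoice {j : N} :
    j ∈ friendChoice v i X ↔ j ∈ X ∧ (j = i ∨ v i j = (Fintype.card N : ℤ)) :=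
  mem_filter

theorem self_mem_friendChoice (hi : i ∈ X) : i ∈ friendChoice v i X :=
  mem_friendChoice.2 ⟨hi, Or.inl rfl⟩

theorem friendChoice_subset : friendChoice v i X ⊆ X :=
  filter_subset _ _

theorem friendChoice_mono (h : S ⊆ T) : friendChoice v i S ⊆ friendChoice v i T :=
  filter_subset_filter _ h

theorem friendsIn_mono (h : S ⊆ T) : friendsIn v i S ⊆ friendsIn v i T :=
  filter_subset_filter _ (erase_subset_erase i h)

theorem friendsIn_friendChoice : friendsIn v i (friendChoice v i X) = friendsIn v i X := by
  ext j
  simp only [friendsIn, friendChoice, mem_filter, mem_erase]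
  tauto

theorem enemiesIn_friendChoice : enemiesIn v i (friendChoice v i X) = ∅ := by
  ext j
  simp only [enemiesIn, friendChoice, mem_filter, mem_erase, notMem_empty, iff_false]
  tauto

theorem card_enemiesIn_lt : #(enemiesIn v i S) < Fintype.card N :=
  card_lt_univ_of_notMem (x := i) fun h => (mem_erase.1 (mem_filter.1 h).1).1 rfl

theorem utility_eq (hv : IsAppreciationOfFriends v) (i : N) (S : Finset N) :
    utility v i S = Fintype.card N * #(friendsIn v i S) - #(enemiesIn v i S) := by
  have henemy : ∀ j ∈ enemiesIn v i S, v i j = -1 := by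
    intro j hj
    obtain ⟨hjS, hvj⟩ := mem_filter.1 hj
    exact (hv i j (ne_of_mem_erase hjS).symm).resolve_right hvj
  rw [utility, ← sum_filter_add_sum_filter_not _ (fun j => v i j = (Fintype.card N : ℤ))]
  change ∑ j ∈ friendsIn v i S, v i j + ∑ j ∈ enemiesIn v i S, v i j = _
  have hfriend : ∀ j ∈ friendsIn v i S, v i j = Fintype.card N := fun j hj => (mem_filter.1 hj).2
  rw [sum_congr rfl hfriend, sum_congr rfl henemy]
  simp only [sum_const, nsmul_eq_mul, smul_neg, mul_one]
  ring

theorem utility_friendChoice (hv : IsAppreciationOfFriends v) (i : N) (X : Finset N) :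
    utility v i (friendChoice v i X) = Fintype.card N * #(friendsIn v i X) := by
  simp [utility_eq hv, friendsIn_friendChoice, enemiesIn_friendChoice]

theorem utility_le_utility_friendChoice (hv : IsAppreciationOfFriends v) (hSX : S ⊆ X) :
    utility v i S ≤ utility v i (friendChoice v i X) := by
  have hcard : (#(friendsIn v i S) : ℤ) ≤ #(friendsIn v i X) := by
    exact_mod_cast card_le_card (friendsIn_mono hSX)
  rw [utility_eq hv, utility_friendChoice hv]
  nlinarith [Int.natCast_nonneg (Fintype.card N), Int.natCast_nonneg #(enemiesIn v i S)]

theorem utility_lt_of_card_friendsIn_lt (hv : IsAppreciationOfFriends v)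
    (h : #(friendsIn v i S) < #(friendsIn v i T)) : utility v i S < utility v i T := by
  have hcard : (#(friendsIn v i S) : ℤ) + 1 ≤ #(friendsIn v i T) := by exact_mod_cast h
  have henemies : (#(enemiesIn v i T) : ℤ) < Fintype.card N := by
    exact_mod_cast card_enemiesIn_lt
  rw [utility_eq hv, utility_eq hv]
  nlinarith [Int.natCast_nonneg (Fintype.card N), Int.natCast_nonneg #(enemiesIn v i S)]

theorem utility_lt_of_ssubset (hv : IsAppreciationOfFriends v) (hST : S ⊂ T) (hi : i ∈ S)
    (hch : friendChoice v i T ⊆ S) : utility v i T < utility v i S := by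
  have hnew : ∀ j ∈ T \ S, v i j < 0 := by
    intro j hj
    obtain ⟨hjT, hjS⟩ := mem_sdiff.1 hj
    have hji : j ≠ i := fun h => hjS (h ▸ hi)
    have hvj : v i j ≠ Fintype.card N := fun h => hjS (hch (mem_friendChoice.2 ⟨hjT, Or.inr h⟩))
    rw [(hv i j hji.symm).resolve_right hvj]
    norm_num
  rw [utility_eq_add_sum_sdiff hST.subset hi]
  linarith [sum_neg hnew (sdiff_nonempty.2 (not_subset_of_ssubset hST))]

theorem utility_le_of_subset (hv : IsAppreciationOfFriends v) (hST : S ⊆ T) (hi : i ∈ S)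
    (hch : friendChoice v i T ⊆ S) : utility v i T ≤ utility v i S := by
  rcases eq_or_ssubset_of_subset hST with rfl | hST
  · exact le_rfl
  · exact (utility_lt_of_ssubset hv hST hi hch).le

theorem friendChoice_subset_of_utility_le (hv : IsAppreciationOfFriends v)
    (hS : friendChoice v i X ⊆ S) (hTX : T ⊆ X) (hiT : i ∈ T)
    (h : utility v i S ≤ utility v i T) : friendChoice v i X ⊆ T := by
  have hcard : #(friendsIn v i S) ≤ #(friendsIn v i T) :=
    not_lt.1 fun hlt => (utility_lt_of_card_friendsIn_lt hv hlt).not_ge h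
  have hfriends : friendsIn v i T = friendsIn v i X := by
    refine eq_of_subset_of_card_le (friendsIn_mono hTX) (le_trans ?_ hcard)
    rw [← friendsIn_friendChoice (X := X)]
    exact card_le_card (friendsIn_mono hS)
  intro j hj
  obtain ⟨hjX, rfl | hvj⟩ := mem_friendChoice.1 hj
  · exact hiT
  by_cases hji : j = i
  · exact hji ▸ hiT
  have hjF : j ∈ friendsIn v i X := mem_filter.2 ⟨mem_erase.2 ⟨hji, hjX⟩, hvj⟩
  rw [← hfriends] at hjF
  exact mem_of_mem_erase (mem_filter.1 hjF).1

theorem friendChoice_eq_of_mem_choiceSets (hv : IsAppreciationOfFriends v) (hiX : i ∈ X)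
    (hS : S ∈ ChoiceSets (ASHGpref v) i X) : S = friendChoice v i X := by
  obtain ⟨hSX, hiS, hopt⟩ := hS
  have hbest : utility v i (friendChoice v i X) ≤ utility v i S :=
    hopt _ friendChoice_subset (self_mem_friendChoice hiX)
  have hsub : friendChoice v i X ⊆ S :=
    friendChoice_subset_of_utility_le hv subset_rfl hSX hiS hbest
  rcases eq_or_ssubset_of_subset hsub with heq | hss
  · exact heq.symm
  · exact absurd hbest (not_le.2 (utility_lt_of_ssubset hv hss (self_mem_friendChoice hiX)
      (friendChoice_mono hSX)))

theorem choiceSets_eq_friendChoice (hv : IsAppreciationOfFriends v) (hiX : i ∈ X) :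
    ChoiceSets (ASHGpref v) i X = {friendChoice v i X} := by
  ext S
  refine ⟨friendChoice_eq_of_mem_choiceSets hv hiX, ?_⟩
  rintro rfl
  exact ⟨friendChoice_subset, self_mem_friendChoice hiX,
    fun _ hS'' _ => utility_le_utility_friendChoice hv hS''⟩

theorem topResponsiveWith_friendChoice (hv : IsAppreciationOfFriends v) :
    TopResponsiveWith (ASHGpref v) (friendChoice v) := by
  refine ⟨fun i X hiX => choiceSets_eq_friendChoice hv hiX, ?_, ?_⟩
  · intro i X Y _ _ h
    rw [sPref_iff, utility_friendChoice hv, utility_friendChoice hv] at h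
    have hcard : (#(friendsIn v i Y) : ℤ) < #(friendsIn v i X) :=
      lt_of_mul_lt_mul_left h (Int.natCast_nonneg _)
    exact sPref_iff.2 (utility_lt_of_card_friendsIn_lt hv (by exact_mod_cast hcard))
  · intro i X Y hiX _ hch hXY
    exact sPref_iff.2 (utility_lt_of_ssubset hv hXY hiX (hch ▸ friendChoice_subset))

theorem mutualTop_friendChoice (hsym : ∀ i j : N, v i j = v j i) :
    MutualTop (friendChoice v) := by
  intro i j X hiX hjX
  simp [mem_friendChoice, hiX, hjX, eq_comm, hsym i j]

def friendGraph (v : N → N → ℤ) : SimpleGraph N :=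
  SimpleGraph.fromRel fun i j => v i j = (Fintype.card N : ℤ)

open Classical in
noncomputable def friendComponent (v : N → N → ℤ) (i : N) : Finset N :=
  univ.filter ((friendGraph v).Reachable i)

theorem mem_friendComponent {j : N} :
    j ∈ friendComponent v i ↔ (friendGraph v).Reachable i j := by
  classical
  simp [friendComponent]

theorem isPartition_friendComponent (v : N → N → ℤ) : IsPartition (friendComponent v) := by
  refine ⟨fun i => mem_friendComponent.2 .rfl, fun i j hj => ?_⟩
  ext k
  simp only [mem_friendComponent]
  have hij := mem_friendComponent.1 hj
  exact ⟨hij.trans, hij.symm.trans⟩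

theorem friendChoice_univ_subset_friendComponent :
    friendChoice v i univ ⊆ friendComponent v i := by
  intro j hj
  rw [mem_friendComponent]
  obtain ⟨-, rfl | hvj⟩ := mem_friendChoice.1 hj
  · exact .rfl
  by_cases hji : j = i
  · exact hji ▸ .rfl
  exact SimpleGraph.Adj.reachable ((SimpleGraph.fromRel_adj _ _ _).2 ⟨Ne.symm hji, Or.inl hvj⟩)

theorem strictlyStrongNashStable_friendComponent (hsym : ∀ i j : N, v i j = v j i)
    (hv : IsAppreciationOfFriends v) :
    StrictlyStrongNashStable (ASHGpref v) (friendComponent v) := by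
  rintro H ⟨-, π', hπ', ⟨-, hreach⟩, hweak, i₀, hi₀, hstrict⟩
  have hkeep : ∀ i ∈ H, friendChoice v i univ ⊆ π' i := fun i hi =>
    friendChoice_subset_of_utility_le hv friendChoice_univ_subset_friendComponent
      (subset_univ _) (hπ'.1 i) (hweak i hi)
  have hadj : ∀ a b, (friendGraph v).Adj a b → π' a = π' b := by
    intro a b hab
    obtain ⟨hne, hvab⟩ := (SimpleGraph.fromRel_adj _ _ _).1 hab
    have hvab : v a b = Fintype.card N := hvab.elim id fun h => (hsym a b).trans h
    by_cases ha : a ∈ H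
    · exact (hπ'.2 a b (hkeep a ha (mem_friendChoice.2 ⟨mem_univ b, Or.inr hvab⟩))).symm
    by_cases hb : b ∈ H
    · exact hπ'.2 b a (hkeep b hb (mem_friendChoice.2 ⟨mem_univ a,
        Or.inr ((hsym b a).trans hvab)⟩))
    have hcomp := (isPartition_friendComponent v).2 a b (mem_friendComponent.2 hab.reachable)
    exact (hreach a b ha hb hne).1 hcomp.symm
  have hsub : friendComponent v i₀ ⊆ π' i₀ := fun j hj =>
    (SimpleGraph.Reachable.eq_of_forall_adj hadj (mem_friendComponent.1 hj)) ▸ hπ'.1 j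
  exact hstrict.2 (utility_le_of_subset hv hsub ((isPartition_friendComponent v).1 i₀)
    ((friendChoice_mono (subset_univ _)).trans friendChoice_univ_subset_friendComponent))

end AppreciationOfFriends

end ASHG

/-- Every symmetric 'appreciation of friends' additively separable hedonic game satisfies
top responsiveness and mutuality, and hence admits a strictly strong Nash stable
partition. -/
theorem appreciationOfFriends_SSNS {N : Type*} [DecidableEq N] [Fintype N]
    (v : N → N → ℤ) (hsym : ∀ i j : N, v i j = v j i)
    (hAoF : ∀ i j : N, i ≠ j → v i j = -1 ∨ v i j = (Fintype.card N : ℤ)) :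
    (∃ ch : N → Finset N → Finset N,
      TopResponsiveWith (ASHGpref v) ch ∧ MutualTop ch) ∧
    ∃ π : N → Finset N, IsPartition π ∧ StrictlyStrongNashStable (ASHGpref v) π :=
  ⟨⟨ASHG.friendChoice v, ASHG.topResponsiveWith_friendChoice hAoF,
      ASHG.mutualTop_friendChoice hsym⟩,
    ASHG.friendComponent v, ASHG.isPartition_friendComponent v,
    ASHG.strictlyStrongNashStable_friendComponent hsym hAoF⟩
end

section
/- Every symmetric 'aversion to enemies' additively separable hedonic game satisfies strong bottom responsiveness and mutuality, and hence admits a strong Nash stable partition. -/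
open Finset

namespace AtESNS

open Finset

variable {N : Type*} [DecidableEq N] [Fintype N]

/-! ### Utility -/

def uu (v : N → N → ℤ) (i : N) (S : Finset N) : ℤ := ∑ j ∈ S.erase i, v i j

lemma pref_iff (v : N → N → ℤ) (i : N) (S T : Finset N) :
    ASHGpref v i S T ↔ uu v i T ≤ uu v i S := Iff.rfl

section Basic

variable {v : N → N → ℤ}

lemma card_pos' (i : N) : 1 ≤ Fintype.card N := by
  have : Nonempty N := ⟨i⟩
  exact Fintype.card_pos

lemma v_le_one (hAtE : ∀ i j : N, i ≠ j → v i j = -(Fintype.card N : ℤ) ∨ v i j = 1)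
    {i j : N} (h : i ≠ j) : v i j ≤ 1 := by
  have h0 : (0 : ℤ) ≤ (Fintype.card N : ℤ) := Int.natCast_nonneg _
  rcases hAtE i j h with h' | h' <;> rw [h'] <;> linarith

lemma v_neg (hAtE : ∀ i j : N, i ≠ j → v i j = -(Fintype.card N : ℤ) ∨ v i j = 1)
    {i j : N} (h : i ≠ j) (hneg : v i j < 0) : v i j = -(Fintype.card N : ℤ) := by
  rcases hAtE i j h with h' | h'
  · exact h'
  · omega

lemma v_pos (hAtE : ∀ i j : N, i ≠ j → v i j = -(Fintype.card N : ℤ) ∨ v i j = 1)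
    {i j : N} (h : i ≠ j) (hnneg : ¬ v i j < 0) : v i j = 1 := by
  have h1 : (1 : ℤ) ≤ (Fintype.card N : ℤ) := by exact_mod_cast card_pos' i
  rcases hAtE i j h with h' | h'
  · omega
  · exact h'

end Basic

/-! ### Part 1 : avoid sets -/

def avf (v : N → N → ℤ) (i : N) (X : Finset N) : Finset N :=
  insert i ((X.erase i).filter fun j => v i j < 0)

section Part1

variable {v : N → N → ℤ}

lemma avf_erase (i : N) (X : Finset N) :
    (avf v i X).erase i = (X.erase i).filter fun j => v i j < 0 := by
  rw [avf, Finset.erase_insert]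
  intro h
  exact (Finset.mem_erase.mp (Finset.mem_filter.mp h).1).1 rfl

lemma avf_subset {i : N} {X : Finset N} (hiX : i ∈ X) : avf v i X ⊆ X :=
  Finset.insert_subset hiX ((Finset.filter_subset _ _).trans (Finset.erase_subset _ _))

lemma mem_avf (i : N) (X : Finset N) : i ∈ avf v i X := Finset.mem_insert_self _ _

lemma uu_avf_min (i : N) {S X : Finset N} (hS : S ⊆ X) :
    uu v i (avf v i X) ≤ uu v i S := by
  rw [uu, uu, avf_erase]
  set F := (X.erase i).filter fun j => v i j < 0 with hF
  set F' := (S.erase i).filter fun j => v i j < 0 with hF'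
  have h1 : F' ⊆ F := Finset.filter_subset_filter _ (Finset.erase_subset_erase _ hS)
  have h2 : ∑ j ∈ F, v i j ≤ ∑ j ∈ F', v i j := by
    have hs := Finset.sum_sdiff (f := v i) h1
    have hnp : ∑ j ∈ F \ F', v i j ≤ 0 :=
      Finset.sum_nonpos fun j hj =>
        le_of_lt (Finset.mem_filter.mp (Finset.mem_sdiff.mp hj).1).2
    linarith
  have h3 : ∑ j ∈ F', v i j ≤ ∑ j ∈ S.erase i, v i j := by
    have hs := Finset.sum_filter_add_sum_filter_not (S.erase i) (fun j => v i j < 0) (v i)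
    have hnn : 0 ≤ ∑ j ∈ (S.erase i).filter (fun j => ¬ v i j < 0), v i j :=
      Finset.sum_nonneg fun j hj => not_lt.mp (Finset.mem_filter.mp hj).2
    linarith
  linarith

lemma avoid_eq (hAtE : ∀ i j : N, i ≠ j → v i j = -(Fintype.card N : ℤ) ∨ v i j = 1)
    (i : N) {X : Finset N} (hiX : i ∈ X) :
    AvoidSets (ASHGpref v) i X = {avf v i X} := by
  ext S
  simp only [AvoidSets, Set.mem_setOf_eq, Set.mem_singleton_iff]
  constructor
  · rintro ⟨hSX, hiS, hmin⟩
    have hmin' : ∀ S'' ⊆ X, i ∈ S'' → uu v i S ≤ uu v i S'' := hmin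
    have hpos : ∀ j ∈ S.erase i, v i j < 0 := by
      intro j hj
      by_contra hcon
      have hji : j ≠ i := (Finset.mem_erase.mp hj).1
      have hv1 : v i j = 1 := v_pos hAtE (Ne.symm hji) hcon
      have hiS' : i ∈ S.erase j := Finset.mem_erase.mpr ⟨Ne.symm hji, hiS⟩
      have hsub : S.erase j ⊆ X := (Finset.erase_subset _ _).trans hSX
      have hle := hmin' _ hsub hiS'
      have heq : uu v i (S.erase j) + v i j = uu v i S := by
        rw [uu, uu, Finset.erase_right_comm]
        exact Finset.sum_erase_add _ _ hj
      rw [hv1] at heq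
      linarith
    have hneg : ∀ j ∈ (X.erase i).filter (fun j => v i j < 0), j ∈ S := by
      intro j hj
      by_contra hcon
      obtain ⟨hjX, hjneg⟩ := Finset.mem_filter.mp hj
      have hji : j ≠ i := (Finset.mem_erase.mp hjX).1
      have hsub : insert j S ⊆ X := Finset.insert_subset (Finset.mem_erase.mp hjX).2 hSX
      have hle := hmin' _ hsub (Finset.mem_insert_of_mem hiS)
      have heq : uu v i (insert j S) = v i j + uu v i S := by
        rw [uu, uu, Finset.erase_insert_of_ne hji, Finset.sum_insert]
        intro hc
        exact hcon (Finset.mem_of_mem_erase hc)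
      linarith
    ext x
    simp only [avf, Finset.mem_insert, Finset.mem_filter]
    constructor
    · intro hx
      by_cases hxi : x = i
      · exact Or.inl hxi
      · refine Or.inr ⟨Finset.mem_erase.mpr ⟨hxi, hSX hx⟩, hpos x (Finset.mem_erase.mpr ⟨hxi, hx⟩)⟩
    · rintro (rfl | hx)
      · exact hiS
      · exact hneg x (Finset.mem_filter.mpr hx)
  · rintro rfl
    exact ⟨avf_subset hiX, mem_avf i X, fun S'' hsub hi => uu_avf_min i hsub⟩

lemma uu_avf_val (hAtE : ∀ i j : N, i ≠ j → v i j = -(Fintype.card N : ℤ) ∨ v i j = 1)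
    (i : N) (X : Finset N) :
    uu v i (avf v i X) =
      -((Fintype.card N : ℤ)) * ((X.erase i).filter fun j => v i j < 0).card := by
  rw [uu, avf_erase]
  rw [Finset.sum_congr rfl (fun j hj => by
    have h := Finset.mem_filter.mp hj
    exact v_neg hAtE (Ne.symm (Finset.mem_erase.mp h.1).1) h.2)]
  rw [Finset.sum_const, nsmul_eq_mul]
  ring

lemma uu_split (hAtE : ∀ i j : N, i ≠ j → v i j = -(Fintype.card N : ℤ) ∨ v i j = 1)
    (i : N) (X : Finset N) :
    uu v i X = uu v i (avf v i X) +
      ((X.erase i).filter fun j => ¬ v i j < 0).card := by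
  have hs := Finset.sum_filter_add_sum_filter_not (X.erase i) (fun j => v i j < 0) (v i)
  have h2 : ∑ j ∈ (X.erase i).filter (fun j => ¬ v i j < 0), v i j
      = (((X.erase i).filter fun j => ¬ v i j < 0).card : ℤ) := by
    rw [Finset.sum_congr rfl (fun j hj => by
      have h := Finset.mem_filter.mp hj
      exact v_pos hAtE (Ne.symm (Finset.mem_erase.mp h.1).1) h.2)]
    rw [Finset.sum_const, nsmul_eq_mul, mul_one]
  have h3 : uu v i (avf v i X) = ∑ j ∈ (X.erase i).filter (fun j => v i j < 0), v i j := by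
    rw [uu, avf_erase]
  rw [uu, ← hs, h2, h3]

lemma filterpos_card_le (i : N) (X : Finset N) :
    (((X.erase i).filter fun j => ¬ v i j < 0).card : ℤ) ≤ (Fintype.card N : ℤ) - 1 := by
  have h1 : ((X.erase i).filter fun j => ¬ v i j < 0).card ≤ (X.erase i).card :=
    Finset.card_filter_le _ _
  have h2 : (X.erase i).card ≤ ((Finset.univ : Finset N).erase i).card :=
    Finset.card_le_card (Finset.erase_subset_erase _ (Finset.subset_univ _))
  have h3 : ((Finset.univ : Finset N).erase i).card = Fintype.card N - 1 := by
    rw [Finset.card_erase_of_mem (Finset.mem_univ i), Finset.card_univ]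
  have h4 : 1 ≤ Fintype.card N := card_pos' i
  omega

end Part1

section Part1b

variable {v : N → N → ℤ}

lemma part1_main (hsym : ∀ i j : N, v i j = v j i)
    (hAtE : ∀ i j : N, i ≠ j → v i j = -(Fintype.card N : ℤ) ∨ v i j = 1) :
    StrongBottomResponsiveWith (ASHGpref v) (avf v) ∧ MutualBottom (avf v) := by
  refine ⟨⟨⟨?_, ?_⟩, fun i X hiX => avoid_eq hAtE i hiX⟩, ?_⟩
  · -- first condition of bottom responsiveness
    intro i X Y hiX hiY hyp
    have hn : (1 : ℤ) ≤ (Fintype.card N : ℤ) := by exact_mod_cast card_pos' i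
    have hsp := hyp (avf v i X)
      (by rw [avoid_eq hAtE i hiX]; exact Set.mem_singleton _) (avf v i Y)
      (by rw [avoid_eq hAtE i hiY]; exact Set.mem_singleton _)
    obtain ⟨-, h2⟩ := hsp
    rw [pref_iff] at h2
    push_neg at h2
    set n : ℤ := (Fintype.card N : ℤ)
    set a := (((X.erase i).filter fun j => v i j < 0).card : ℤ) with ha
    set b := (((Y.erase i).filter fun j => v i j < 0).card : ℤ) with hb
    have hvX : uu v i (avf v i X) = -(n * a) := by rw [uu_avf_val hAtE]; ring
    have hvY : uu v i (avf v i Y) = -(n * b) := by rw [uu_avf_val hAtE]; ring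
    have hlt : -(n * b) < -(n * a) := by rw [← hvX, ← hvY]; exact h2
    have hab : a < b := by
      have := (mul_lt_mul_iff_right₀ (show (0:ℤ) < n by linarith)).mp (by linarith : n * a < n * b)
      exact this
    have hq : 0 ≤ n * (b - a - 1) := mul_nonneg (by linarith) (by linarith)
    have hq' : n * (b - a - 1) = n * b - n * a - n := by ring
    have hX : uu v i X = -(n * a) +
        (((X.erase i).filter fun j => ¬ v i j < 0).card : ℤ) := by
      rw [uu_split hAtE i X, hvX]
    have hY : uu v i Y = -(n * b) +
        (((Y.erase i).filter fun j => ¬ v i j < 0).card : ℤ) := by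
      rw [uu_split hAtE i Y, hvY]
    have hpx : (0:ℤ) ≤ (((X.erase i).filter fun j => ¬ v i j < 0).card : ℤ) :=
      Int.natCast_nonneg _
    have hpy : (((Y.erase i).filter fun j => ¬ v i j < 0).card : ℤ) ≤ n - 1 :=
      filterpos_card_le i Y
    have hfin : uu v i Y < uu v i X := by linarith
    exact ⟨le_of_lt hfin, not_le.mpr hfin⟩
  · -- second condition of bottom responsiveness
    intro i X Y hiX hiY hint hcard
    obtain ⟨S', hS'⟩ := hint
    have hSX' := hS'.1
    have hSY' := hS'.2
    rw [avoid_eq hAtE i hiX] at hSX'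
    rw [avoid_eq hAtE i hiY] at hSY'
    have havv : avf v i X = avf v i Y := by
      rw [← hSX', ← hSY']
    have hFF : ((X.erase i).filter fun j => v i j < 0)
        = ((Y.erase i).filter fun j => v i j < 0) := by
      rw [← avf_erase (v := v) i X, ← avf_erase (v := v) i Y, havv]
    have hcX : ((X.erase i).filter fun j => v i j < 0).card +
        ((X.erase i).filter fun j => ¬ v i j < 0).card = (X.erase i).card :=
      Finset.card_filter_add_card_filter_not _
    have hcY : ((Y.erase i).filter fun j => v i j < 0).card +
        ((Y.erase i).filter fun j => ¬ v i j < 0).card = (Y.erase i).card :=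
      Finset.card_filter_add_card_filter_not _
    have heX : (X.erase i).card = X.card - 1 := Finset.card_erase_of_mem hiX
    have heY : (Y.erase i).card = Y.card - 1 := Finset.card_erase_of_mem hiY
    have h1X : 1 ≤ X.card := Finset.card_pos.mpr ⟨i, hiX⟩
    have h1Y : 1 ≤ Y.card := Finset.card_pos.mpr ⟨i, hiY⟩
    have hpp : ((Y.erase i).filter fun j => ¬ v i j < 0).card ≤
        ((X.erase i).filter fun j => ¬ v i j < 0).card := by
      rw [hFF] at hcX
      omega
    rw [pref_iff]
    rw [uu_split hAtE i X, uu_split hAtE i Y, uu_avf_val hAtE, uu_avf_val hAtE, hFF]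
    have : (((Y.erase i).filter fun j => ¬ v i j < 0).card : ℤ) ≤
        (((X.erase i).filter fun j => ¬ v i j < 0).card : ℤ) := by exact_mod_cast hpp
    linarith
  · -- mutuality
    intro i j X hiX hjX
    by_cases hij : i = j
    · subst hij; exact Iff.rfl
    · simp only [avf, Finset.mem_insert, Finset.mem_filter, Finset.mem_erase]
      constructor
      · rintro (h | ⟨⟨_, _⟩, hneg⟩)
        · exact absurd h hij
        · exact Or.inr ⟨⟨Ne.symm hij, hjX⟩, by rw [hsym]; exact hneg⟩
      · rintro (h | ⟨⟨_, _⟩, hneg⟩)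
        · exact absurd h (Ne.symm hij)
        · exact Or.inr ⟨⟨hij, hiX⟩, by rw [hsym]; exact hneg⟩

end Part1b

/-! ### Part 2 : greedy maximum-clique partition -/

section Part2

variable (v : N → N → ℤ)

def IsCliqueV (S : Finset N) : Prop := ∀ i ∈ S, ∀ j ∈ S, i ≠ j → v i j = 1

open Classical in
noncomputable def maxClique (X : Finset N) : Finset N :=
  (Finset.exists_max_image (X.powerset.filter (IsCliqueV v)) Finset.card
    ⟨∅, by simp [IsCliqueV]⟩).choose

open Classical in
lemma maxClique_spec (X : Finset N) :
    maxClique v X ∈ X.powerset.filter (IsCliqueV v) ∧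
      ∀ S ∈ X.powerset.filter (IsCliqueV v), S.card ≤ (maxClique v X).card :=
  (Finset.exists_max_image (X.powerset.filter (IsCliqueV v)) Finset.card
    ⟨∅, by simp [IsCliqueV]⟩).choose_spec

lemma maxClique_subset (X : Finset N) : maxClique v X ⊆ X := by
  classical
  have h := (maxClique_spec v X).1
  rw [Finset.mem_filter, Finset.mem_powerset] at h
  exact h.1

lemma maxClique_clique (X : Finset N) : IsCliqueV v (maxClique v X) := by
  classical
  have h := (maxClique_spec v X).1
  rw [Finset.mem_filter] at h
  exact h.2

lemma maxClique_max {X S : Finset N} (hS : S ⊆ X) (hcl : IsCliqueV v S) :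
    S.card ≤ (maxClique v X).card := by
  classical
  exact (maxClique_spec v X).2 S (Finset.mem_filter.mpr ⟨Finset.mem_powerset.mpr hS, hcl⟩)

lemma maxClique_card_pos {X : Finset N} {x : N} (hx : x ∈ X) :
    0 < (maxClique v X).card := by
  have h : ({x} : Finset N).card ≤ (maxClique v X).card := by
    apply maxClique_max v (Finset.singleton_subset_iff.mpr hx)
    intro a ha b hb hab
    rw [Finset.mem_singleton] at ha hb
    exact absurd (ha.trans hb.symm) hab
  simpa using h

noncomputable def gpA : ℕ → Finset N → N → Finset N
  | 0, _, _ => ∅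
  | (k+1), X, i => if i ∈ maxClique v X then X else gpA k (X \ maxClique v X) i

lemma gpA_step {X : Finset N} {i : N} {k : ℕ} (hk : X.card ≤ k + 1) (hi : i ∈ X)
    (hC : i ∉ maxClique v X) : (X \ maxClique v X).card ≤ k ∧ i ∈ X \ maxClique v X := by
  have h1 : (X \ maxClique v X).card = X.card - (maxClique v X).card :=
    Finset.card_sdiff_of_subset (maxClique_subset v X)
  have h2 : 0 < (maxClique v X).card := maxClique_card_pos v hi
  exact ⟨by omega, Finset.mem_sdiff.mpr ⟨hi, hC⟩⟩

lemma gpA_mem : ∀ (k : ℕ) (X : Finset N) (i : N), X.card ≤ k → i ∈ X →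
    i ∈ maxClique v (gpA v k X i) ∧ gpA v k X i ⊆ X := by
  intro k
  induction k with
  | zero => intro X i hk hi
            rw [Nat.le_zero, Finset.card_eq_zero] at hk
            subst hk; exact absurd hi (Finset.notMem_empty i)
  | succ k ih =>
    intro X i hk hi
    by_cases hC : i ∈ maxClique v X
    · rw [gpA, if_pos hC]; exact ⟨hC, Finset.Subset.refl X⟩
    · obtain ⟨hk', hi'⟩ := gpA_step v hk hi hC
      rw [gpA, if_neg hC]
      obtain ⟨h1, h2⟩ := ih _ i hk' hi'
      exact ⟨h1, h2.trans (Finset.sdiff_subset)⟩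

lemma gpA_block : ∀ (k : ℕ) (X : Finset N) (i j : N), X.card ≤ k → i ∈ X →
    j ∈ maxClique v (gpA v k X i) → gpA v k X j = gpA v k X i := by
  intro k
  induction k with
  | zero => intro X i j hk hi _
            rw [Nat.le_zero, Finset.card_eq_zero] at hk
            subst hk; exact absurd hi (Finset.notMem_empty i)
  | succ k ih =>
    intro X i j hk hi hj
    by_cases hC : i ∈ maxClique v X
    · simp only [gpA] at hj ⊢
      rw [if_pos hC] at hj ⊢
      rw [if_pos hj]
    · obtain ⟨hk', hi'⟩ := gpA_step v hk hi hC
      simp only [gpA] at hj ⊢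
      rw [if_neg hC] at hj ⊢
      have hjX' : j ∈ X \ maxClique v X :=
        (gpA_mem v k _ i hk' hi').2 ((maxClique_subset v _) hj)
      have hjC : j ∉ maxClique v X := (Finset.mem_sdiff.mp hjX').2
      rw [if_neg hjC]
      exact ih _ i j hk' hi' hj

lemma gpA_comp : ∀ (k : ℕ) (X : Finset N) (i j : N), X.card ≤ k → i ∈ X → j ∈ X →
    gpA v k X i = gpA v k X j ∨
    gpA v k X i ⊆ gpA v k X j \ maxClique v (gpA v k X j) ∨
    gpA v k X j ⊆ gpA v k X i \ maxClique v (gpA v k X i) := by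
  intro k
  induction k with
  | zero => intro X i j hk hi _
            rw [Nat.le_zero, Finset.card_eq_zero] at hk
            subst hk; exact absurd hi (Finset.notMem_empty i)
  | succ k ih =>
    intro X i j hk hi hj
    by_cases hCi : i ∈ maxClique v X <;> by_cases hCj : j ∈ maxClique v X
    · left; simp only [gpA]; rw [if_pos hCi, if_pos hCj]
    · right; right
      obtain ⟨hk', hj'⟩ := gpA_step v hk hj hCj
      simp only [gpA]; rw [if_pos hCi, if_neg hCj]
      exact (gpA_mem v k _ j hk' hj').2
    · right; left
      obtain ⟨hk', hi'⟩ := gpA_step v hk hi hCi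
      simp only [gpA]; rw [if_neg hCi, if_pos hCj]
      exact (gpA_mem v k _ i hk' hi').2
    · obtain ⟨hk', hi'⟩ := gpA_step v hk hi hCi
      have hj' : j ∈ X \ maxClique v X := Finset.mem_sdiff.mpr ⟨hj, hCj⟩
      simp only [gpA]; rw [if_neg hCi, if_neg hCj]
      exact ih _ i j hk' hi' hj'

end Part2

section Part2b

variable {v : N → N → ℤ}

lemma uu_friends {i : N} {S : Finset N} (hi : i ∈ S)
    (hf : ∀ j ∈ S.erase i, v i j = 1) : uu v i S = (S.card : ℤ) - 1 := by
  rw [uu, Finset.sum_congr rfl hf, Finset.sum_const, nsmul_eq_mul, mul_one,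
    Finset.card_erase_of_mem hi]
  have h1 : 1 ≤ S.card := Finset.card_pos.mpr ⟨i, hi⟩
  rw [Nat.cast_sub h1, Nat.cast_one]

lemma uu_enemy_neg (hAtE : ∀ i j : N, i ≠ j → v i j = -(Fintype.card N : ℤ) ∨ v i j = 1)
    {i e : N} {S : Finset N} (hi : i ∈ S) (he : e ∈ S.erase i)
    (hneg : v i e < 0) : uu v i S < 0 := by
  have hcard : S.card ≤ Fintype.card N := (Finset.card_le_univ S).trans_eq Finset.card_univ
  have hei : e ≠ i := (Finset.mem_erase.mp he).1
  have hveq : v i e = -(Fintype.card N : ℤ) := v_neg hAtE (Ne.symm hei) hneg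
  have hsum : v i e + ∑ j ∈ (S.erase i).erase e, v i j = ∑ j ∈ S.erase i, v i j :=
    Finset.add_sum_erase _ _ he
  have hbound : ∑ j ∈ (S.erase i).erase e, v i j ≤ (((S.erase i).erase e).card : ℤ) := by
    calc ∑ j ∈ (S.erase i).erase e, v i j ≤ ((S.erase i).erase e).card • (1:ℤ) :=
        Finset.sum_le_card_nsmul _ _ 1 (fun x hx => v_le_one hAtE
          (Ne.symm (Finset.mem_erase.mp (Finset.mem_of_mem_erase hx)).1))
      _ = _ := by rw [nsmul_eq_mul, mul_one]
  have hc1 : (S.erase i).card = S.card - 1 := Finset.card_erase_of_mem hi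
  have hc2 : ((S.erase i).erase e).card = (S.erase i).card - 1 := Finset.card_erase_of_mem he
  have hp1 : 1 ≤ (S.erase i).card := Finset.card_pos.mpr ⟨e, he⟩
  have hcast : (((S.erase i).erase e).card : ℤ) ≤ (Fintype.card N : ℤ) - 2 := by
    have h : ((S.erase i).erase e).card + 2 ≤ Fintype.card N := by omega
    have h' := (Nat.cast_le (α := ℤ)).mpr h
    push_cast at h'
    linarith
  rw [uu, ← hsum, hveq]
  linarith

end Part2b

section Part2c

variable (v : N → N → ℤ)

noncomputable def Af : N → Finset N := fun i => gpA v (Fintype.card N) Finset.univ i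

noncomputable def pf : N → Finset N := fun i => maxClique v (Af v i)

lemma pf_eq (i : N) : pf v i = maxClique v (Af v i) := rfl

lemma Af_mem (i : N) : i ∈ pf v i ∧ Af v i ⊆ Finset.univ :=
  gpA_mem v (Fintype.card N) Finset.univ i (le_of_eq Finset.card_univ) (Finset.mem_univ i)

lemma Af_block (i j : N) (hj : j ∈ pf v i) : Af v j = Af v i :=
  gpA_block v (Fintype.card N) Finset.univ i j (le_of_eq Finset.card_univ)
    (Finset.mem_univ i) hj

lemma Af_comp (i j : N) :
    Af v i = Af v j ∨ Af v i ⊆ Af v j \ pf v j ∨ Af v j ⊆ Af v i \ pf v i :=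
  gpA_comp v (Fintype.card N) Finset.univ i j (le_of_eq Finset.card_univ)
    (Finset.mem_univ i) (Finset.mem_univ j)

lemma pf_subset (i : N) : pf v i ⊆ Af v i := maxClique_subset v (Af v i)

lemma pf_partition : IsPartition (pf v) := by
  refine ⟨fun i => (Af_mem v i).1, fun i j hj => ?_⟩
  rw [pf_eq, pf_eq, Af_block v i j hj]

end Part2c

section Part2d

variable {v : N → N → ℤ}

lemma part2_main (hsym : ∀ i j : N, v i j = v j i)
    (hAtE : ∀ i j : N, i ≠ j → v i j = -(Fintype.card N : ℤ) ∨ v i j = 1) :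
    ∃ π : N → Finset N, IsPartition π ∧ StrongNashStable (ASHGpref v) π := by
  classical
  refine ⟨pf v, pf_partition v, ?_⟩
  intro H hblk
  obtain ⟨hHne, π', hπ'part, ⟨hne', hiff⟩, himp⟩ := hblk
  -- Step 1: every deviator ends up in an enemy-free coalition strictly larger than before
  have key : ∀ x ∈ H, (∀ y ∈ (π' x).erase x, v x y = 1) ∧ (pf v x).card < (π' x).card := by
    intro x hx
    obtain ⟨h1, h2⟩ := himp x hx
    rw [pref_iff] at h2
    push_neg at h2
    have hxπ : x ∈ pf v x := (Af_mem v x).1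
    have hclq : IsCliqueV v (pf v x) := maxClique_clique v (Af v x)
    have hfx : ∀ j ∈ (pf v x).erase x, v x j = 1 := fun j hj =>
      hclq x hxπ j (Finset.mem_of_mem_erase hj) (Ne.symm (Finset.mem_erase.mp hj).1)
    have hux : uu v x (pf v x) = ((pf v x).card : ℤ) - 1 := uu_friends hxπ hfx
    have hpos : (0:ℤ) ≤ uu v x (pf v x) := by
      rw [hux]
      have h1c : 1 ≤ (pf v x).card := Finset.card_pos.mpr ⟨x, hxπ⟩
      have : (1:ℤ) ≤ ((pf v x).card : ℤ) := by exact_mod_cast h1c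
      linarith
    have hxπ' : x ∈ π' x := hπ'part.1 x
    have hfr : ∀ y ∈ (π' x).erase x, v x y = 1 := by
      intro y hy
      by_contra hcon
      have hyx : y ≠ x := (Finset.mem_erase.mp hy).1
      have hneg : v x y < 0 := by
        rcases hAtE x y (Ne.symm hyx) with h' | h'
        · rw [h']
          have hn : 1 ≤ Fintype.card N := card_pos' x
          have : (1:ℤ) ≤ (Fintype.card N : ℤ) := by exact_mod_cast hn
          linarith
        · exact absurd h' hcon
      have := uu_enemy_neg hAtE hxπ' hy hneg
      linarith
    refine ⟨hfr, ?_⟩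
    have hux' : uu v x (π' x) = ((π' x).card : ℤ) - 1 := uu_friends hxπ' hfr
    have : ((pf v x).card : ℤ) < ((π' x).card : ℤ) := by
      rw [hux, hux'] at h2; linarith
    exact_mod_cast this
  -- pick a deviator with maximal availability set
  obtain ⟨i, hiH, hmax⟩ := Finset.exists_max_image H (fun x => (Af v x).card) hHne
  have hAmax : ∀ h ∈ H, Af v h ⊆ Af v i := by
    intro h hh
    rcases Af_comp v h i with he | hsub | hsub
    · rw [he]
    · exact hsub.trans Finset.sdiff_subset
    · have h1 : Af v i ⊆ Af v h := hsub.trans Finset.sdiff_subset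
      have h2 : Af v i = Af v h := Finset.eq_of_subset_of_card_le h1 (hmax h hh)
      have h3 : h ∈ pf v h := (Af_mem v h).1
      have h4 : h ∈ Af v i := h2 ▸ (pf_subset v h h3)
      exact absurd h3 (Finset.mem_sdiff.mp (hsub h4)).2
  have hiS : i ∈ π' i := hπ'part.1 i
  have hSblk : ∀ x ∈ π' i, π' x = π' i := fun x hx => hπ'part.2 i x hx
  have hfrH : ∀ x ∈ H, x ∈ π' i → ∀ y ∈ π' i, y ≠ x → v x y = 1 := by
    intro x hx hxS y hyS hyx
    have h := (key x hx).1
    rw [hSblk x hxS] at h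
    exact h y (Finset.mem_erase.mpr ⟨hyx, hyS⟩)
  have honeblk : ∀ j ∈ π' i, ∀ j' ∈ π' i, j ∉ H → j' ∉ H → pf v j = pf v j' := by
    intro j hj j' hj' hjH hj'H
    by_cases hjj : j = j'
    · rw [hjj]
    · exact (hiff j j' hjH hj'H hjj).mpr ((hSblk j hj).trans (hSblk j' hj').symm)
  -- the deviating coalition lives inside the availability set of i
  have hSAi : π' i ⊆ Af v i := by
    intro y hy
    by_cases hyH : y ∈ H
    · exact hAmax y hyH (pf_subset v y (Af_mem v y).1)
    · rcases Af_comp v y i with he | hsub | hsub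
      · rw [← he]; exact pf_subset v y (Af_mem v y).1
      · exact (hsub.trans Finset.sdiff_subset) (pf_subset v y (Af_mem v y).1)
      · exfalso
        have hiAy : i ∈ Af v y := (hsub.trans Finset.sdiff_subset) (pf_subset v i (Af_mem v i).1)
        have hiπy : i ∉ pf v y :=
          fun hc => (Finset.mem_sdiff.mp (hsub (pf_subset v i (Af_mem v i).1))).2 hc
        have hπyH : ∀ z ∈ pf v y, z ∉ H := by
          intro z hz hzH
          have hAz : Af v z = Af v y := Af_block v y z hz
          have h1 : Af v y ⊆ Af v i := hAz ▸ hAmax z hzH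
          have h2 : Af v y = Af v i :=
            Finset.Subset.antisymm h1 (hsub.trans Finset.sdiff_subset)
          have h3 : y ∈ pf v y := (Af_mem v y).1
          have h4 : y ∈ Af v i := h2 ▸ (pf_subset v y h3)
          exact (Finset.mem_sdiff.mp (hsub h4)).2 h3
        have hπyS : pf v y ⊆ π' i := by
          intro z hz
          have hπz : pf v z = pf v y := (pf_partition v).2 y z hz
          by_cases hzy : z = y
          · rw [hzy]; exact hy
          · have hz' : z ∈ π' z := hπ'part.1 z
            have heq : π' z = π' y := (hiff z y (hπyH z hz) hyH hzy).mp hπz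
            rw [heq, hSblk y hy] at hz'
            exact hz'
        have hclT : IsCliqueV v (insert i (pf v y)) := by
          intro a ha b hb hab
          rcases Finset.mem_insert.mp ha with rfl | haπ
          · rcases Finset.mem_insert.mp hb with rfl | hbπ
            · exact absurd rfl hab
            · exact hfrH a hiH hiS b (hπyS hbπ) (Ne.symm hab)
          · rcases Finset.mem_insert.mp hb with rfl | hbπ
            · rw [hsym]; exact hfrH b hiH hiS a (hπyS haπ) hab
            · exact maxClique_clique v (Af v y) a haπ b hbπ hab
        have hTsub : insert i (pf v y) ⊆ Af v y :=
          Finset.insert_subset hiAy (pf_subset v y)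
        have hle := maxClique_max v hTsub hclT
        rw [Finset.card_insert_of_notMem hiπy, ← pf_eq] at hle
        omega
  -- the deviating coalition is a clique
  have hScl : IsCliqueV v (π' i) := by
    intro a ha b hb hab
    by_cases haH : a ∈ H
    · exact hfrH a haH ha b hb (Ne.symm hab)
    · by_cases hbH : b ∈ H
      · rw [hsym]; exact hfrH b hbH hb a ha hab
      · have hππ : pf v a = pf v b := honeblk a ha b hb haH hbH
        have hbπ : b ∈ pf v a := hππ ▸ (Af_mem v b).1
        exact maxClique_clique v (Af v a) a (Af_mem v a).1 b hbπ hab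
  have hfinal := maxClique_max v hSAi hScl
  rw [← pf_eq] at hfinal
  have hlt := (key i hiH).2
  omega

end Part2d

end AtESNS


/-- Every symmetric 'aversion to enemies' additively separable hedonic game satisfies
strong bottom responsiveness and mutuality, and hence admits a strong Nash stable
partition. -/
theorem aversionToEnemies_SNS {N : Type*} [DecidableEq N] [Fintype N]
    (v : N → N → ℤ) (hsym : ∀ i j : N, v i j = v j i)
    (hAtE : ∀ i j : N, i ≠ j → v i j = -(Fintype.card N : ℤ) ∨ v i j = 1) :
    (∃ av : N → Finset N → Finset N,
      StrongBottomResponsiveWith (ASHGpref v) av ∧ MutualBottom av) ∧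
    ∃ π : N → Finset N, IsPartition π ∧ StrongNashStable (ASHGpref v) π :=
  ⟨⟨AtESNS.avf v, AtESNS.part1_main hsym hAtE⟩, AtESNS.part2_main hsym hAtE⟩
end

section
/- Every B-hedonic game with strict preferences admits a strict core stable partition. -/
open Finset

/-- `IsBest ple i S b` : `b` is the best player of `S \ {i}` under `i`'s preferences over
players (with the convention that the best player of `∅` is `i` himself). -/
def IsBest {N : Type*} [DecidableEq N] (ple : N → N → N → Prop)
    (i : N) (S : Finset N) (b : N) : Prop :=
  if (S.erase i).Nonempty then b ∈ S.erase i ∧ ∀ j ∈ S.erase i, ple i b j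
  else b = i

/-- The B-preferences over coalitions induced by preferences `ple` over players:
`S ≿_i T` iff the best player of `S \ {i}` is strictly preferred to the best player of
`T \ {i}`, or the best players coincide and `|S| ≤ |T|`. -/
def BPref {N : Type*} [DecidableEq N] (ple : N → N → N → Prop) : Pref N := fun i S T =>
  ∃ b c : N, IsBest ple i S b ∧ IsBest ple i T c ∧
    ((ple i b c ∧ b ≠ c) ∨ (b = c ∧ S.card ≤ T.card))

section Helper

variable {N : Type*} [DecidableEq N] (ple : N → N → N → Prop)

lemma exists_max_aux (htot : ∀ i j k : N, ple i j k ∨ ple i k j)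
    (htrans : ∀ i j k l : N, ple i j k → ple i k l → ple i j l)
    (i : N) (X : Finset N) : X.Nonempty → ∃ b ∈ X, ∀ j ∈ X, ple i b j := by
  induction X using Finset.induction_on with
  | empty => rintro ⟨x, hx⟩; simp at hx
  | @insert a s ha ih =>
    intro _
    by_cases hs : s.Nonempty
    · obtain ⟨b, hb, hbm⟩ := ih hs
      rcases htot i a b with h | h
      · refine ⟨a, mem_insert_self _ _, fun j hj => ?_⟩
        rcases mem_insert.1 hj with rfl | hj
        · exact (htot i j j).elim id id
        · exact htrans i a b j h (hbm j hj)
      · refine ⟨b, mem_insert_of_mem hb, fun j hj => ?_⟩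
        rcases mem_insert.1 hj with rfl | hj
        · exact h
        · exact hbm j hj
    · have hse : s = ∅ := not_nonempty_iff_eq_empty.1 hs
      subst hse
      refine ⟨a, mem_insert_self _ _, fun j hj => ?_⟩
      simp only [mem_insert, Finset.notMem_empty, or_false] at hj
      subst hj; exact (htot i j j).elim id id

lemma bpref_refl_aux (htot : ∀ i j k : N, ple i j k ∨ ple i k j)
    (htrans : ∀ i j k l : N, ple i j k → ple i k l → ple i j l)
    (i : N) (S : Finset N) : BPref ple i S S := by
  by_cases h : (S.erase i).Nonempty
  · obtain ⟨b, hb, hbm⟩ := exists_max_aux ple htot htrans i _ h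
    have hB : IsBest ple i S b := by unfold IsBest; rw [if_pos h]; exact ⟨hb, hbm⟩
    exact ⟨b, b, hB, hB, Or.inr ⟨rfl, le_refl _⟩⟩
  · have hB : IsBest ple i S i := by unfold IsBest; rw [if_neg h]
    exact ⟨i, i, hB, hB, Or.inr ⟨rfl, le_refl _⟩⟩

lemma buildP_aux [Fintype N]
    (htot : ∀ i j k : N, ple i j k ∨ ple i k j)
    (htrans : ∀ i j k l : N, ple i j k → ple i k l → ple i j l)
    (hstrict : ∀ i j k : N, ple i j k → ple i k j → j = k)
    (X : Finset N) :
    ∃ π : N → Finset N,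
      (∀ i, i ∈ π i) ∧ (∀ i, i ∉ X → π i = {i}) ∧ (∀ i ∈ X, π i ⊆ X) ∧
      (∀ i j, j ∈ π i → π j = π i) ∧
      (∀ S : Finset N, S ⊆ X → ¬ WeaklyBlocks (BPref ple) π S) := by
  induction X using Finset.strongInduction with
  | _ X ih =>
  by_cases hX : X.Nonempty
  · classical
    -- the "favorite player" map on `X`
    have hexf : ∀ k : N, ∃ b : N, k ∈ X → b ∈ X ∧ ∀ j ∈ X, ple k b j := by
      intro k
      by_cases hk : k ∈ X
      · obtain ⟨b, hb, hbm⟩ := exists_max_aux ple htot htrans k X hX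
        exact ⟨b, fun _ => ⟨hb, hbm⟩⟩
      · exact ⟨k, fun h => absurd h hk⟩
    choose f hf using hexf
    have hfX : ∀ k ∈ X, f k ∈ X := fun k hk => (hf k hk).1
    have hfmax : ∀ k ∈ X, ∀ j ∈ X, ple k (f k) j := fun k hk => (hf k hk).2
    have horb : ∀ t, ∀ k ∈ X, f^[t] k ∈ X := by
      intro t
      induction t with
      | zero => simpa using fun k hk => hk
      | succ t iht => intro k hk; rw [Function.iterate_succ_apply]; exact iht _ (hfX k hk)
    obtain ⟨j₀, hj₀⟩ := hX
    -- find a periodic point by pigeonhole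
    obtain ⟨a, ha, b, hb, hab, heq⟩ :=
      Finset.exists_ne_map_eq_of_card_lt_of_maps_to
        (s := Finset.range (X.card + 1)) (t := X) (f := fun t => f^[t] j₀)
        (by simp) (fun t _ => horb t j₀ hj₀)
    obtain ⟨a', b', hlt, heq'⟩ : ∃ a' b' : ℕ, a' < b' ∧ f^[a'] j₀ = f^[b'] j₀ := by
      rcases lt_or_gt_of_ne hab with h | h
      exacts [⟨a, b, h, heq⟩, ⟨b, a, h, heq.symm⟩]
    set n := b' - a' with hn_def
    set j := f^[a'] j₀ with hj_def
    have hn : 0 < n := Nat.sub_pos_of_lt hlt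
    have hjX : j ∈ X := horb _ _ hj₀
    have hper : f^[n] j = j := by
      rw [hj_def, ← Function.iterate_add_apply, Nat.sub_add_cancel hlt.le, ← heq']
    -- the cycle through `j`
    set C := (Finset.range n).image (fun t => f^[t] j) with hC_def
    have hmemC : ∀ c, c ∈ C ↔ ∃ t < n, f^[t] j = c := by
      intro c; simp [hC_def]
    have hjC : j ∈ C := (hmemC j).2 ⟨0, hn, rfl⟩
    have hCX : C ⊆ X := by
      intro c hc; obtain ⟨t, _, rfl⟩ := (hmemC c).1 hc; exact horb t j hjX
    have hperiodic : ∀ t, f^[t] j ∈ C := by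
      intro t
      have h1 : ∀ q, f^[q * n] j = j := by
        intro q
        induction q with
        | zero => simp
        | succ q ihq => rw [Nat.succ_mul, Function.iterate_add_apply, hper, ihq]
      have h2 : f^[t] j = f^[t % n] j := by
        conv_lhs => rw [← Nat.mod_add_div t n]
        rw [Function.iterate_add_apply, Nat.mul_comm, h1]
      rw [h2]
      exact (hmemC _).2 ⟨t % n, Nat.mod_lt _ hn, rfl⟩
    have hclosed : ∀ c ∈ C, f c ∈ C := by
      intro c hc; obtain ⟨t, _, rfl⟩ := (hmemC c).1 hc
      have h := hperiodic (t + 1)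
      rwa [Function.iterate_succ_apply'] at h
    have horbitC : ∀ c ∈ C, ∀ c' ∈ C, ∃ t, f^[t] c = c' := by
      intro c hc c' hc'
      obtain ⟨s, hs, rfl⟩ := (hmemC c).1 hc
      obtain ⟨t, ht, rfl⟩ := (hmemC c').1 hc'
      refine ⟨t + (n - s), ?_⟩
      rw [← Function.iterate_add_apply]
      have he : t + (n - s) + s = t + n := by omega
      rw [he, Function.iterate_add_apply, hper]
    -- the key blocking analysis
    have hkey : ∀ i ∈ C, ∀ S : Finset N, S ⊆ X → i ∈ S → BPref ple i S C →
        f i ∈ S ∧ S.card ≤ C.card := by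
      intro i hiC S hSX hiS hpref
      obtain ⟨b₁, c₁, hb₁, hc₁, hcond⟩ := hpref
      by_cases hfi : f i = i
      · -- `i` is its own favorite; then `C = {i}`
        have hfix : ∀ t, f^[t] i = i := by
          intro t
          induction t with
          | zero => rfl
          | succ t iht => rw [Function.iterate_succ_apply', iht, hfi]
        have hCi : C = {i} := by
          apply Finset.Subset.antisymm
          · intro c' hc'
            obtain ⟨t, ht⟩ := horbitC i hiC c' hc'
            rw [← ht, hfix]; exact mem_singleton_self i
          · simpa using hiC
        have hcc : c₁ = i := by
          rw [hCi] at hc₁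
          unfold IsBest at hc₁
          rwa [if_neg (by simp)] at hc₁
        rw [hcc] at hcond
        have hSe : ¬ (S.erase i).Nonempty := by
          intro hne
          unfold IsBest at hb₁; rw [if_pos hne] at hb₁
          obtain ⟨hbm, -⟩ := hb₁
          have hbX : b₁ ∈ X := hSX (Finset.mem_of_mem_erase hbm)
          have hbne : b₁ ≠ i := Finset.ne_of_mem_erase hbm
          have h1 : ple i i b₁ := by
            have := hfmax i (hCX hiC) b₁ hbX; rwa [hfi] at this
          rcases hcond with ⟨h2, h3⟩ | ⟨h2, -⟩
          · exact h3 (hstrict i b₁ i h2 h1)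
          · exact hbne h2
        have hSi : S = {i} := by
          apply Finset.Subset.antisymm
          · intro x hx
            by_contra hxne
            exact hSe ⟨x, Finset.mem_erase.2 ⟨by simpa using hxne, hx⟩⟩
          · simpa using hiS
        constructor
        · rw [hfi]; exact hiS
        · rw [hSi, hCi]
      · -- `i`'s favorite is someone else, and that favorite is the best member of `C`
        have hfiC : f i ∈ C := hclosed i hiC
        have hfie : f i ∈ C.erase i := Finset.mem_erase.2 ⟨hfi, hfiC⟩
        have hCe : (C.erase i).Nonempty := ⟨f i, hfie⟩
        unfold IsBest at hc₁; rw [if_pos hCe] at hc₁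
        obtain ⟨hcm, hcbest⟩ := hc₁
        have hiX : i ∈ X := hCX hiC
        have hcX : c₁ ∈ X := hCX (Finset.mem_of_mem_erase hcm)
        have hcfi : c₁ = f i := hstrict i c₁ (f i) (hcbest _ hfie) (hfmax i hiX c₁ hcX)
        rw [hcfi] at hcond
        by_cases hne : (S.erase i).Nonempty
        · unfold IsBest at hb₁; rw [if_pos hne] at hb₁
          obtain ⟨hbm, -⟩ := hb₁
          have hbX : b₁ ∈ X := hSX (Finset.mem_of_mem_erase hbm)
          rcases hcond with ⟨h2, h3⟩ | ⟨h2, h3⟩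
          · exact absurd (hstrict i b₁ (f i) h2 (hfmax i hiX b₁ hbX)) h3
          · exact ⟨h2 ▸ Finset.mem_of_mem_erase hbm, h3⟩
        · unfold IsBest at hb₁; rw [if_neg hne] at hb₁
          rw [hb₁] at hcond
          exfalso
          rcases hcond with ⟨h2, h3⟩ | ⟨h2, -⟩
          · exact h3 (hstrict i i (f i) h2 (hfmax i hiX i hiX))
          · exact hfi h2.symm
    -- recurse on the remaining players
    have hss : X \ C ⊂ X := Finset.sdiff_ssubset hCX ⟨j, hjC⟩
    obtain ⟨π', hp1, hp2, hp3, hp4, hp5⟩ := ih (X \ C) hss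
    refine ⟨fun i => if i ∈ C then C else π' i, ?_, ?_, ?_, ?_, ?_⟩
    · intro i
      by_cases h : i ∈ C <;> simp [h, hp1 i]
    · intro i hi
      have hiC : i ∉ C := fun h => hi (hCX h)
      simp only [if_neg hiC]
      exact hp2 i (by simp [hi])
    · intro i hi
      by_cases h : i ∈ C
      · simpa [h] using hCX
      · simp only [if_neg h]
        exact (hp3 i (Finset.mem_sdiff.2 ⟨hi, h⟩)).trans Finset.sdiff_subset
    · intro i k hk
      by_cases h : i ∈ C
      · simp only [if_pos h] at hk ⊢
        rw [if_pos hk]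
      · simp only [if_neg h] at hk ⊢
        by_cases hiX2 : i ∈ X
        · have hkXC : k ∈ X \ C := hp3 i (Finset.mem_sdiff.2 ⟨hiX2, h⟩) hk
          have hkC : k ∉ C := (Finset.mem_sdiff.1 hkXC).2
          rw [if_neg hkC]; exact hp4 i k hk
        · have hpi : π' i = {i} := hp2 i (by simp [hiX2])
          rw [hpi] at hk
          have hk' : k = i := by simpa using hk
          subst hk'
          rw [if_neg h]
    · -- no coalition inside `X` weakly blocks
      intro S hSX hblock
      obtain ⟨hweak, j₁, hj₁S, hstr⟩ := hblock
      by_cases hSC : (S ∩ C).Nonempty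
      · obtain ⟨i₀, hi₀⟩ := hSC
        have hi₀S : i₀ ∈ S := (Finset.mem_inter.1 hi₀).1
        have hi₀C : i₀ ∈ C := (Finset.mem_inter.1 hi₀).2
        have step : ∀ i ∈ C, i ∈ S → f i ∈ S ∧ S.card ≤ C.card := by
          intro i hiC hiS
          have h := hweak i hiS
          simp only [if_pos hiC] at h
          exact hkey i hiC S hSX hiS h
        have horbS : ∀ t, f^[t] i₀ ∈ S ∧ f^[t] i₀ ∈ C := by
          intro t
          induction t with
          | zero => exact ⟨hi₀S, hi₀C⟩
          | succ t iht =>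
            obtain ⟨h1, h2⟩ := iht
            rw [Function.iterate_succ_apply']
            exact ⟨(step _ h2 h1).1, hclosed _ h2⟩
        have hCS : C ⊆ S := by
          intro c hc
          obtain ⟨t, ht⟩ := horbitC i₀ hi₀C c hc
          rw [← ht]; exact (horbS t).1
        have hSCeq : S = C := (Finset.eq_of_subset_of_card_le hCS (step i₀ hi₀C hi₀S).2).symm
        have hj₁C : j₁ ∈ C := hSCeq ▸ hj₁S
        have hcontra : SPref (BPref ple) j₁ S S := by
          have h := hstr
          simp only [if_pos hj₁C] at h
          rwa [← hSCeq] at h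
        exact hcontra.2 (bpref_refl_aux ple htot htrans j₁ S)
      · have hnotin : ∀ x ∈ S, x ∉ C := fun x hx hxC =>
          hSC ⟨x, Finset.mem_inter.2 ⟨hx, hxC⟩⟩
        have hSdiff : S ⊆ X \ C := fun x hx =>
          Finset.mem_sdiff.2 ⟨hSX hx, hnotin x hx⟩
        apply hp5 S hSdiff
        refine ⟨fun i hi => ?_, j₁, hj₁S, ?_⟩
        · have h := hweak i hi
          simpa only [if_neg (hnotin i hi)] using h
        · have h := hstr
          simpa only [if_neg (hnotin j₁ hj₁S)] using h
  · refine ⟨fun i => {i}, fun i => mem_singleton_self i, fun _ _ => rfl, ?_, ?_, ?_⟩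
    · intro i hi
      exact absurd ⟨i, hi⟩ hX
    · intro i j hj
      have : j = i := by simpa using hj
      subst this; rfl
    · intro S hS hblk
      have hSe : S = ∅ := subset_empty.1 (by rwa [not_nonempty_iff_eq_empty.1 hX] at hS)
      obtain ⟨_, j, hj, _⟩ := hblk
      subst hSe
      exact absurd hj (Finset.notMem_empty j)

end Helper

/-- Every B-hedonic game with strict preferences admits a strict core stable partition. -/
theorem BPref_exists_strictCore {N : Type*} [DecidableEq N] [Fintype N]
    (ple : N → N → N → Prop)
    (htot : ∀ i j k : N, ple i j k ∨ ple i k j)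
    (htrans : ∀ i j k l : N, ple i j k → ple i k l → ple i j l)
    (hstrict : ∀ i j k : N, ple i j k → ple i k j → j = k) :
    ∃ π : N → Finset N, IsPartition π ∧ StrictCoreStable (BPref ple) π := by
  obtain ⟨π, h1, -, -, h4, h5⟩ := buildP_aux ple htot htrans hstrict (Finset.univ : Finset N)
  exact ⟨π, ⟨h1, h4⟩, fun S => h5 S (Finset.subset_univ S)⟩
end
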